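/- arXiv:2208.12710 — 11 statements merged into one kernel-verified Lean document; each statement's English description precedes it below -/
import Mathlib

section
/- Let m ≥ 2, n ≥ m+1, and let H be a maximal clique in the Johnson graph J_n(m,m-1). Put B = ⋃_{v ∈ H} ν(v). Then ⋂_{v ∈ H} ν(v) = ∅ if and only if ν(v₁) ∪ ν(v₂) = B for every pair of distinct vertices v₁, v₂ of H. -/
/-!
If the clique contains `v₁ ≠ v₂` and some member `w` has a point `x ∉ v₁ ∪ v₂`, then
`w \ {x} = v₁ ∩ v₂`, and every member `u` of the clique contains `I = v₁ ∩ v₂`: a member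
missing some `i ∈ I` would contain `(v₁ ∪ v₂ ∪ {x}) \ {i}`, which has `m + 1` elements.
As `|I| = m - 1 ≥ 1`, the intersection of the clique is then nonempty.

Conversely, if all pairwise unions equal `B`, then `|B| = m + 1`; a point `x` common to all members
would make `B \ {x}` adjacent to every member, so by maximality `B \ {x}` belongs to the clique,
although it misses `x`.
-/

abbrev JohnsonVertex (n m : ℕ) := {A : Finset (Fin n) // A.card = m}

def johnsonGraph (n m : ℕ) : SimpleGraph (JohnsonVertex n m) where
  Adj v w := v ≠ w ∧ (v.1 ∩ w.1).card = m - 1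
  symm := ⟨fun v w h => ⟨h.1.symm, by rw [Finset.inter_comm]; exact h.2⟩⟩
  loopless := ⟨fun v h => h.1 rfl⟩

namespace SimpleGraph

variable {V : Type*} {G : SimpleGraph V}

theorem mem_of_maximal_isClique [DecidableEq V] {H : Finset V}
    (hH : Maximal (fun s : Finset V => G.IsClique ↑s) H) {c : V}
    (hc : ∀ u ∈ H, c ≠ u → G.Adj c u) : c ∈ H :=
  hH.2 (by simpa using hH.1.insert hc) (Finset.subset_insert c H) (Finset.mem_insert_self c H)

theorem one_lt_card_of_maximal_isClique [Nonempty V] (hG : ∀ v, ∃ w, G.Adj v w) {H : Finset V}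
    (hH : Maximal (fun s : Finset V => G.IsClique ↑s) H) : 1 < H.card := by
  classical
  by_contra! hle
  obtain ⟨v, hHv⟩ := Finset.card_le_one_iff_subset_singleton.1 hle
  obtain ⟨w, hvw⟩ := hG v
  have hw : w ∈ H := mem_of_maximal_isClique hH fun u hu _ =>
    Finset.mem_singleton.1 (hHv hu) ▸ hvw.symm
  exact hvw.ne (Finset.mem_singleton.1 (hHv hw)).symm

end SimpleGraph

namespace johnsonGraph

variable {n m : ℕ}

theorem nonempty_vertex (h : m ≤ n) : Nonempty (JohnsonVertex n m) := by
  obtain ⟨A, hA⟩ :=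
    Finset.powersetCard_nonempty.2 (by simpa using h : m ≤ (Finset.univ : Finset (Fin n)).card)
  exact ⟨⟨A, (Finset.mem_powersetCard.1 hA).2⟩⟩

theorem exists_adj (hm : 1 ≤ m) (hn : m + 1 ≤ n) (v : JohnsonVertex n m) :
    ∃ w, (johnsonGraph n m).Adj v w := by
  obtain ⟨a, ha⟩ : v.1.Nonempty := Finset.card_pos.1 (by omega)
  obtain ⟨b, hb⟩ : v.1ᶜ.Nonempty := by
    rw [← Finset.card_pos, Finset.card_compl, v.2, Fintype.card_fin]; omega
  rw [Finset.mem_compl] at hb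
  have hbe : b ∉ v.1.erase a := fun h => hb (Finset.mem_of_mem_erase h)
  refine ⟨⟨insert b (v.1.erase a), ?_⟩, fun h => hb ?_, ?_⟩
  · rw [Finset.card_insert_of_notMem hbe, Finset.card_erase_of_mem ha, v.2]; omega
  · rw [h]; exact Finset.mem_insert_self b _
  · change (v.1 ∩ insert b (v.1.erase a)).card = m - 1
    rw [Finset.inter_comm, Finset.insert_inter_of_notMem hb,
      Finset.inter_eq_left.2 (Finset.erase_subset a _), Finset.card_erase_of_mem ha, v.2]

theorem inter_eq_erase_of_adj {u z : JohnsonVertex n m} (h : (johnsonGraph n m).Adj u z)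
    {i : Fin n} (hiz : i ∈ z.1) (hiu : i ∉ u.1) : u.1 ∩ z.1 = z.1.erase i := by
  refine Finset.eq_of_subset_of_card_le (fun y hy => ?_) ?_
  · rw [Finset.mem_inter] at hy
    exact Finset.mem_erase.2 ⟨fun hyi => hiu (hyi ▸ hy.1), hy.2⟩
  · rw [Finset.card_erase_of_mem hiz, z.2, h.2]

theorem erase_subset_of_adj {u z : JohnsonVertex n m} (h : (johnsonGraph n m).Adj u z)
    {i : Fin n} (hiz : i ∈ z.1) (hiu : i ∉ u.1) : z.1.erase i ⊆ u.1 :=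
  inter_eq_erase_of_adj h hiz hiu ▸ Finset.inter_subset_left

theorem card_union_of_adj {u z : JohnsonVertex n m} (h : (johnsonGraph n m).Adj u z) :
    (u.1 ∪ z.1).card = m + 1 := by
  have hm : m ≠ 0 := by
    rintro rfl
    exact h.1 (Subtype.ext ((Finset.card_eq_zero.1 u.2).trans (Finset.card_eq_zero.1 z.2).symm))
  have := Finset.card_union_add_card_inter u.1 z.1
  rw [u.2, z.2, h.2] at this
  omega

theorem erase_eq_inter_of_adj {v₁ v₂ w : JohnsonVertex n m} (h₁ : (johnsonGraph n m).Adj v₁ w)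
    (h₂ : (johnsonGraph n m).Adj v₂ w) (h₁₂ : (johnsonGraph n m).Adj v₁ v₂) {x : Fin n}
    (hxw : x ∈ w.1) (hx₁ : x ∉ v₁.1) (hx₂ : x ∉ v₂.1) : w.1.erase x = v₁.1 ∩ v₂.1 := by
  refine Finset.eq_of_subset_of_card_le (Finset.subset_inter ?_ ?_) ?_
  · exact erase_subset_of_adj h₁ hxw hx₁
  · exact erase_subset_of_adj h₂ hxw hx₂
  · rw [h₁₂.2, Finset.card_erase_of_mem hxw, w.2]

theorem inter_subset_of_isClique {H : Finset (JohnsonVertex n m)}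
    (hH : (johnsonGraph n m).IsClique ↑H) {v₁ v₂ w u : JohnsonVertex n m} (hv₁ : v₁ ∈ H)
    (hv₂ : v₂ ∈ H) (hw : w ∈ H) (hu : u ∈ H) (hne : v₁ ≠ v₂) {x : Fin n} (hxw : x ∈ w.1)
    (hx : x ∉ v₁.1 ∪ v₂.1) : v₁.1 ∩ v₂.1 ⊆ u.1 := by
  have hx₁ : x ∉ v₁.1 := fun h => hx (Finset.mem_union_left _ h)
  have hx₂ : x ∉ v₂.1 := fun h => hx (Finset.mem_union_right _ h)
  have adj : ∀ {a b}, a ∈ H → b ∈ H → a ≠ b → (johnsonGraph n m).Adj a b :=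
    fun ha hb hab => hH ha hb hab
  have h₁₂ := adj hv₁ hv₂ hne
  have hIw : v₁.1 ∩ v₂.1 ⊆ w.1 :=
    erase_eq_inter_of_adj (adj hv₁ hw (by rintro rfl; exact hx₁ hxw))
      (adj hv₂ hw (by rintro rfl; exact hx₂ hxw)) h₁₂ hxw hx₁ hx₂ ▸ Finset.erase_subset x w.1
  intro i hi
  by_contra hiu
  obtain ⟨hi₁, hi₂⟩ := Finset.mem_inter.1 hi
  have sub : ∀ {z}, z ∈ H → i ∈ z.1 → z.1.erase i ⊆ u.1 := fun hz hiz =>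
    erase_subset_of_adj (adj hu hz (by rintro rfl; exact hiu hiz)) hiz hiu
  have hbig : (insert x (v₁.1 ∪ v₂.1)).erase i ⊆ u.1 := by
    intro y hy
    obtain ⟨hyi, hy⟩ := Finset.mem_erase.1 hy
    rcases Finset.mem_insert.1 hy with rfl | hy
    · exact sub hw (hIw hi) (Finset.mem_erase.2 ⟨hyi, hxw⟩)
    · rcases Finset.mem_union.1 hy with hy | hy
      · exact sub hv₁ hi₁ (Finset.mem_erase.2 ⟨hyi, hy⟩)
      · exact sub hv₂ hi₂ (Finset.mem_erase.2 ⟨hyi, hy⟩)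
  have hcard := Finset.card_le_card hbig
  rw [Finset.card_erase_of_mem (Finset.mem_insert_of_mem (Finset.mem_union_left _ hi₁)),
    Finset.card_insert_of_notMem hx, card_union_of_adj h₁₂, u.2] at hcard
  omega

theorem union_eq_sup_of_inf_eq_empty {H : Finset (JohnsonVertex n m)}
    (hH : (johnsonGraph n m).IsClique ↑H) (hm : 2 ≤ m) (hinf : H.inf Subtype.val = ∅)
    {v₁ v₂ : JohnsonVertex n m} (hv₁ : v₁ ∈ H) (hv₂ : v₂ ∈ H) (hne : v₁ ≠ v₂) :
    v₁.1 ∪ v₂.1 = H.sup Subtype.val := by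
  by_contra hU
  have hsub : v₁.1 ∪ v₂.1 ⊆ H.sup Subtype.val :=
    Finset.union_subset (Finset.le_sup hv₁) (Finset.le_sup hv₂)
  obtain ⟨x, hxB, hx⟩ := Finset.exists_of_ssubset (hsub.ssubset_of_ne hU)
  obtain ⟨w, hw, hxw⟩ := Finset.mem_sup.1 hxB
  have hI : v₁.1 ∩ v₂.1 ⊆ H.inf Subtype.val :=
    Finset.le_inf fun u hu => inter_subset_of_isClique hH hv₁ hv₂ hw hu hne hxw hx
  have hIcard : (v₁.1 ∩ v₂.1).card = m - 1 := (hH hv₁ hv₂ hne).2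
  rw [hinf, Finset.subset_empty] at hI
  rw [hI, Finset.card_empty] at hIcard
  omega

theorem inf_eq_empty_of_union_eq_sup {H : Finset (JohnsonVertex n m)}
    (hH : Maximal (fun s : Finset (JohnsonVertex n m) => (johnsonGraph n m).IsClique ↑s) H)
    {v w : JohnsonVertex n m} (hv : v ∈ H) (hw : w ∈ H) (hvw : v ≠ w)
    (hU : v.1 ∪ w.1 = H.sup Subtype.val) : H.inf Subtype.val = ∅ := by
  set B := H.sup Subtype.val
  have hBcard : B.card = m + 1 := hU ▸ card_union_of_adj (hH.1 hv hw hvw)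
  refine Finset.eq_empty_of_forall_notMem fun x hx => ?_
  have hxH : ∀ u ∈ H, x ∈ u.1 := fun u hu => Finset.inf_le (f := Subtype.val) hu hx
  have hxB : x ∈ B := Finset.le_sup (f := Subtype.val) hv (hxH v hv)
  let c : JohnsonVertex n m := ⟨B.erase x, by rw [Finset.card_erase_of_mem hxB, hBcard]; rfl⟩
  have hc : c ∈ H := SimpleGraph.mem_of_maximal_isClique hH fun u hu hcu => by
    refine ⟨hcu, ?_⟩
    change (B.erase x ∩ u.1).card = m - 1
    rw [Finset.erase_inter, Finset.inter_eq_right.2 (Finset.le_sup (f := Subtype.val) hu),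
      Finset.card_erase_of_mem (hxH u hu), u.2]
  exact Finset.notMem_erase x B (hxH c hc)

end johnsonGraph

/-- For a maximal clique `H` of `J_n(m,m-1)` with `B = ⋃_{v ∈ H} ν(v)`:
the intersection of the labels is empty iff `ν(v₁) ∪ ν(v₂) = B` for all distinct
`v₁, v₂ ∈ H`. -/
theorem stmt3 (n m : ℕ) (hm : 2 ≤ m) (hn : m + 1 ≤ n)
    (H : Finset (JohnsonVertex n m))
    (hH : Maximal (fun s : Finset (JohnsonVertex n m) => (johnsonGraph n m).IsClique ↑s) H)
    (B : Finset (Fin n)) (hB : B = H.sup Subtype.val) :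
    H.inf Subtype.val = ∅ ↔
      ∀ v₁ ∈ H, ∀ v₂ ∈ H, v₁ ≠ v₂ → v₁.1 ∪ v₂.1 = B := by
  subst hB
  have := johnsonGraph.nonempty_vertex (n := n) (m := m) (by omega)
  obtain ⟨v, hv, w, hw, hvw⟩ := Finset.one_lt_card.1 <|
    SimpleGraph.one_lt_card_of_maximal_isClique (johnsonGraph.exists_adj (by omega) hn) hH
  exact ⟨fun hinf _ hv₁ _ hv₂ hne =>
      johnsonGraph.union_eq_sup_of_inf_eq_empty hH.1 hm hinf hv₁ hv₂ hne,
    fun hU => johnsonGraph.inf_eq_empty_of_union_eq_sup hH hv hw hvw (hU v hv w hw hvw)⟩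
end

section
/- Let m ≥ 2, n ≥ m+1, and let H be a maximal clique in the Johnson graph J_n(m,m-1). If there exist three distinct vertices v₁, v₂, v₃ of H with |ν(v₁) ∩ ν(v₂) ∩ ν(v₃)| = m−1, then ⋂_{v ∈ H} ν(v) = ν(v₁) ∩ ν(v₂). -/
/-!
Put `S = ν(v₁) ∩ ν(v₂)`. The hypothesis forces `ν(vᵢ) ∩ ν(vⱼ) = S` for all `i ≠ j`, so the three
labels form a sunflower with kernel `S` and their union has `m + 2` elements. If some `v ∈ H`
missed a point `s ∈ S`, then `ν(v) ∩ ν(vᵢ) = ν(vᵢ) \ {s}` for each `i`, since both have `m - 1`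
elements; hence `ν(v)` would contain the `m + 1` elements of `(ν(v₁) ∪ ν(v₂) ∪ ν(v₃)) \ {s}`.
-/

namespace Finset

variable {α : Type*} [DecidableEq α]

theorem erase_subset_of_card_inter_eq {m : ℕ} {v w : Finset α} {s : α} (hw : #w = m)
    (hvw : #(v ∩ w) = m - 1) (hs : s ∈ w) (hsv : s ∉ v) : w.erase s ⊆ v := by
  have hsub : v ∩ w ⊆ w.erase s := fun x hx =>
    mem_erase.mpr ⟨fun hxs => hsv (hxs ▸ (mem_inter.mp hx).1), (mem_inter.mp hx).2⟩
  rw [← eq_of_subset_of_card_le hsub (by rw [card_erase_of_mem hs, hw, hvw])]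
  exact inter_subset_left

theorem inter_eq_of_card_inter_inter_eq {k : ℕ} {A B C : Finset α} (hAB : #(A ∩ B) = k)
    (hAC : #(A ∩ C) = k) (hBC : #(B ∩ C) = k) (hABC : #(A ∩ B ∩ C) = k) :
    A ∩ C = A ∩ B ∧ B ∩ C = A ∩ B := by
  have hAB' : A ∩ B ∩ C = A ∩ B :=
    eq_of_subset_of_card_le inter_subset_left (by rw [hAB, hABC])
  have hAC' : A ∩ B ∩ C = A ∩ C :=
    eq_of_subset_of_card_le (inter_subset_inter_right inter_subset_left) (by rw [hAC, hABC])
  have hBC' : A ∩ B ∩ C = B ∩ C :=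
    eq_of_subset_of_card_le (inter_subset_inter_right inter_subset_right) (by rw [hBC, hABC])
  exact ⟨hAC'.symm.trans hAB', hBC'.symm.trans hAB'⟩

theorem card_union_union_add_of_inter_eq {A B C S : Finset α} (hAB : A ∩ B = S)
    (hAC : A ∩ C = S) (hBC : B ∩ C = S) : #(A ∪ B ∪ C) + 2 * #S = #A + #B + #C := by
  have hABC : (A ∪ B) ∩ C = S := by rw [union_inter_distrib_right, hAC, hBC, union_self]
  have h₁ := card_union_add_card_inter A B
  have h₂ := card_union_add_card_inter (A ∪ B) C
  rw [hAB] at h₁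
  rw [hABC] at h₂
  omega

end Finset

open Finset

theorem johnsonGraph_isClique_erase_subset {n m : ℕ} {H : Finset (JohnsonVertex n m)}
    (hH : (johnsonGraph n m).IsClique (H : Set (JohnsonVertex n m))) {v w : JohnsonVertex n m}
    (hv : v ∈ H) (hw : w ∈ H) {s : Fin n} (hs : s ∈ w.1) (hsv : s ∉ v.1) : w.1.erase s ⊆ v.1 :=
  have hvw : v ≠ w := fun h => hsv (h ▸ hs)
  erase_subset_of_card_inter_eq w.2 (hH hv hw hvw).2 hs hsv

theorem stmt4_general (n m : ℕ) (hm : 2 ≤ m)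
    (H : Finset (JohnsonVertex n m))
    (hH : Maximal (fun s : Finset (JohnsonVertex n m) => (johnsonGraph n m).IsClique ↑s) H)
    (v₁ v₂ v₃ : JohnsonVertex n m) (h₁ : v₁ ∈ H) (h₂ : v₂ ∈ H) (h₃ : v₃ ∈ H)
    (h₁₂ : v₁ ≠ v₂) (h₁₃ : v₁ ≠ v₃) (h₂₃ : v₂ ≠ v₃)
    (hcap : (v₁.1 ∩ v₂.1 ∩ v₃.1).card = m - 1) :
    H.inf Subtype.val = v₁.1 ∩ v₂.1 := by
  have hclique := hH.1
  obtain ⟨h₁₃S, h₂₃S⟩ := inter_eq_of_card_inter_inter_eq (hclique h₁ h₂ h₁₂).2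
    (hclique h₁ h₃ h₁₃).2 (hclique h₂ h₃ h₂₃).2 hcap
  have hU : #(v₁.1 ∪ v₂.1 ∪ v₃.1) = m + 2 := by
    have := card_union_union_add_of_inter_eq rfl h₁₃S h₂₃S
    rw [(hclique h₁ h₂ h₁₂).2, v₁.2, v₂.2, v₃.2] at this
    omega
  refine le_antisymm (le_inf (inf_le h₁) (inf_le h₂)) (Finset.le_inf fun v hv => ?_)
  by_contra hSv
  obtain ⟨s, hsS, hsv⟩ := not_subset.mp hSv
  have hs₃ : s ∈ v₃.1 := (mem_inter.mp (h₁₃S ▸ hsS)).2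
  have hsub : (v₁.1 ∪ v₂.1 ∪ v₃.1).erase s ⊆ v.1 := by
    simp only [erase_union_distrib, union_subset_iff]
    exact ⟨⟨johnsonGraph_isClique_erase_subset hclique hv h₁ (mem_inter.mp hsS).1 hsv,
      johnsonGraph_isClique_erase_subset hclique hv h₂ (mem_inter.mp hsS).2 hsv⟩,
      johnsonGraph_isClique_erase_subset hclique hv h₃ hs₃ hsv⟩
  have := card_le_card hsub
  rw [card_erase_of_mem (mem_union_right _ hs₃), hU, v.2] at this
  omega

/-- If three distinct vertices of a maximal clique `H` of `J_n(m,m-1)` have labels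
intersecting in `m - 1` elements, then `⋂_{v ∈ H} ν(v) = ν(v₁) ∩ ν(v₂)`. -/
theorem stmt4 (n m : ℕ) (hm : 2 ≤ m) (hn : m + 1 ≤ n)
    (H : Finset (JohnsonVertex n m))
    (hH : Maximal (fun s : Finset (JohnsonVertex n m) => (johnsonGraph n m).IsClique ↑s) H)
    (v₁ v₂ v₃ : JohnsonVertex n m) (h₁ : v₁ ∈ H) (h₂ : v₂ ∈ H) (h₃ : v₃ ∈ H)
    (h₁₂ : v₁ ≠ v₂) (h₁₃ : v₁ ≠ v₃) (h₂₃ : v₂ ≠ v₃)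
    (hcap : (v₁.1 ∩ v₂.1 ∩ v₃.1).card = m - 1) :
    H.inf Subtype.val = v₁.1 ∩ v₂.1 :=
  stmt4_general n m hm H hH v₁ v₂ v₃ h₁ h₂ h₃ h₁₂ h₁₃ h₂₃ hcap
end

section
/- For m ≥ 2 and n ≥ m+1, the clique number of the Johnson graph J_n(m,m-1) equals max(m+1, n−m+1). -/
open Finset

namespace Finset

variable {α : Type*} [DecidableEq α] {m : ℕ}

lemma card_inter_lt_of_not_subset {C U : Finset α} (h : ¬C ⊆ U) : #(C ∩ U) < #C :=
  card_lt_card ⟨inter_subset_left, fun hC => h (subset_inter_iff.1 hC).2⟩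

lemma inter_subset_or_subset_union_of_card_inter {A B C : Finset α} (hC : #C = m)
    (hAC : #(A ∩ C) = m - 1) (hBC : #(B ∩ C) = m - 1) (hAB : #(A ∩ B) = m - 1) :
    A ∩ B ⊆ C ∨ C ⊆ A ∪ B := by
  refine or_iff_not_imp_right.2 fun hCU => ?_
  have hlt := card_inter_lt_of_not_subset hCU
  have hsum := card_union_add_card_inter (A ∩ C) (B ∩ C)
  rw [← union_inter_distrib_right, ← inter_inter_distrib_right, inter_comm (A ∪ B)] at hsum
  have hK : A ∩ B ∩ C = A ∩ B :=
    eq_of_subset_of_card_le inter_subset_left (by omega)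
  exact inter_eq_left.1 hK

lemma card_le_card_compl_of_forall_insert [Fintype α] {F : Finset (Finset α)} {K : Finset α}
    (h : ∀ C ∈ F, K ⊆ C ∧ #K + 1 = #C) : #F ≤ #Kᶜ :=
  calc #F ≤ #(Kᶜ.image (insert · K)) := card_le_card fun C hC => by
        obtain ⟨a, haK, rfl⟩ := exists_eq_insert_iff.2 (h C hC)
        exact mem_image_of_mem _ (mem_compl.2 haK)
    _ ≤ #Kᶜ := card_image_le

lemma card_le_of_forall_erase {F : Finset (Finset α)} {U : Finset α}
    (h : ∀ C ∈ F, C ⊆ U ∧ #C + 1 = #U) : #F ≤ #U :=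
  calc #F ≤ #(U.image U.erase) := card_le_card fun C hC => by
        obtain ⟨a, haU, rfl⟩ :=
          covBy_iff_exists_erase.1 (covBy_iff_exists_insert.2 (exists_eq_insert_iff.2 (h C hC)))
        exact mem_image_of_mem _ haU
    _ ≤ #U := card_image_le

section Family

variable {F : Finset (Finset α)} (hcard : ∀ A ∈ F, #A = m)
  (hinter : (F : Set (Finset α)).Pairwise fun A B => #(A ∩ B) = m - 1)
include hcard hinter

lemma forall_inter_subset_or_forall_subset_union {A B : Finset α} (hA : A ∈ F) (hB : B ∈ F)
    (hAB : A ≠ B) : (∀ C ∈ F, A ∩ B ⊆ C) ∨ ∀ C ∈ F, C ⊆ A ∪ B := by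
  have hK := hinter hA hB hAB
  have sandwich : ∀ C ∈ F, A ∩ B ⊆ C ∨ C ⊆ A ∪ B := by
    intro C hC
    by_cases hCA : C = A
    · exact .inr (hCA ▸ subset_union_left)
    by_cases hCB : C = B
    · exact .inr (hCB ▸ subset_union_right)
    exact inter_subset_or_subset_union_of_card_inter (hcard C hC)
      (hinter hA hC (Ne.symm hCA)) (hinter hB hC (Ne.symm hCB)) hK
  refine or_iff_not_imp_left.2 fun hstar => ?_
  obtain ⟨C₀, hC₀, hKC₀⟩ := not_forall₂.1 hstar
  have hC₀U := (sandwich C₀ hC₀).resolve_left hKC₀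
  intro D hD
  refine (sandwich D hD).elim (fun hKD => ?_) id
  by_contra hDU
  -- `D ∩ C₀ ⊆ D ∩ (A ∪ B) ⊊ D` and `#(D ∩ C₀) = m - 1` force `D ∩ C₀ = D ∩ (A ∪ B) ⊇ A ∩ B`.
  have hlt := card_inter_lt_of_not_subset hDU
  have hDC₀ : D ∩ C₀ = D ∩ (A ∪ B) :=
    eq_of_subset_of_card_le (inter_subset_inter_left hC₀U)
      (by rw [hinter hD hC₀ (fun h => hDU (h ▸ hC₀U)), ← hcard D hD]; omega)
  exact hKC₀ ((subset_inter hKD inter_subset_union).trans (hDC₀ ▸ inter_subset_right))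

lemma card_le_max_of_pairwise_card_inter [Fintype α] (hm : 1 ≤ m) :
    #F ≤ max (m + 1) (Fintype.card α - m + 1) := by
  rcases le_or_gt #F 1 with hF | hF
  · omega
  obtain ⟨A, hA, B, hB, hAB⟩ := one_lt_card.1 hF
  have hK := hinter hA hB hAB
  rcases forall_inter_subset_or_forall_subset_union hcard hinter hA hB hAB with
    hstar | htop
  · have hle := card_le_card_compl_of_forall_insert fun C hC => ⟨hstar C hC, by grind⟩
    have hmα : m ≤ Fintype.card α := hcard A hA ▸ card_le_univ A
    rw [card_compl, hK] at hle
    omega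
  · have hU := card_union_add_card_inter A B
    rw [hcard A hA, hcard B hB, hK] at hU
    have hle := card_le_of_forall_erase fun C hC => ⟨htop C hC, by grind⟩
    omega

end Family

lemma pairwise_card_inter_powersetCard {U : Finset α} (hU : #U = m + 1) :
    ((U.powersetCard m : Finset (Finset α)) : Set (Finset α)).Pairwise
      fun A B => #(A ∩ B) = m - 1 := by
  intro A hA B hB hAB
  rw [mem_coe, mem_powersetCard] at hA hB
  have hAB' : ¬A ⊆ B := fun h => hAB (eq_of_subset_of_card_le h (by omega))
  have hlt := card_inter_lt_of_not_subset hAB'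
  have hle := card_le_card (union_subset hA.1 hB.1)
  have := card_union_add_card_inter A B
  omega

lemma insert_inter_insert_of_ne {K : Finset α} {a b : α} (hab : a ≠ b) :
    insert a K ∩ insert b K = K := by
  ext x; simp only [mem_inter, mem_insert]; grind

lemma pairwise_card_inter_image_insert (K s : Finset α) :
    ((s.image (insert · K) : Finset (Finset α)) : Set (Finset α)).Pairwise
      fun A B => #(A ∩ B) = #K := by
  rw [coe_image]
  refine Set.Pairwise.image fun a _ b _ hab => ?_
  simp only [Function.onFun, insert_inter_insert_of_ne hab]

lemma card_image_insert_of_disjoint {K s : Finset α} (hs : Disjoint s K) :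
    #(s.image (insert · K)) = #s :=
  card_image_of_injOn fun _ ha _ _ h => (insert_inj (disjoint_left.1 hs ha)).1 h

lemma card_eq_of_mem_image_insert_of_disjoint {K s A : Finset α} (hs : Disjoint s K)
    (hA : A ∈ s.image (insert · K)) : #A = #K + 1 := by
  obtain ⟨a, ha, rfl⟩ := mem_image.1 hA
  exact card_insert_of_notMem (disjoint_left.1 hs ha)

end Finset

section Johnson

variable {n m : ℕ}

lemma johnsonGraph_isClique_iff {S : Finset (JohnsonVertex n m)} :
    (johnsonGraph n m).IsClique (S : Set (JohnsonVertex n m)) ↔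
      (↑(S.map (Function.Embedding.subtype _)) : Set (Finset (Fin n))).Pairwise
        fun A B => #(A ∩ B) = m - 1 := by
  rw [coe_map, Function.Embedding.coe_subtype, Subtype.val_injective.injOn.pairwise_image]
  exact ⟨fun h u hu v hv huv => (h hu hv huv).2, fun h u hu v hv huv => ⟨huv, h hu hv huv⟩⟩

lemma cliqueNum_johnsonGraph_le (hm : 1 ≤ m) :
    (johnsonGraph n m).cliqueNum ≤ max (m + 1) (n - m + 1) := by
  obtain ⟨S, hS⟩ := (johnsonGraph n m).exists_isNClique_cliqueNum
  rw [← hS.card_eq, ← card_map (Function.Embedding.subtype _)]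
  simpa using card_le_max_of_pairwise_card_inter
    (fun A hA => by obtain ⟨v, -, rfl⟩ := mem_map.1 hA; exact v.2)
    (johnsonGraph_isClique_iff.1 hS.isClique) hm

lemma card_le_cliqueNum_johnsonGraph {F : Finset (Finset (Fin n))} (hcard : ∀ A ∈ F, #A = m)
    (hinter : (F : Set (Finset (Fin n))).Pairwise fun A B => #(A ∩ B) = m - 1) :
    #F ≤ (johnsonGraph n m).cliqueNum := by
  have hF : (F.subtype (#· = m)).map (Function.Embedding.subtype _) = F := by
    rw [subtype_map, filter_true_of_mem hcard]
  rw [← hF, card_map]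
  exact (johnsonGraph_isClique_iff.2 (by rwa [hF])).card_le_cliqueNum

end Johnson

/-- For `m ≥ 2` and `n ≥ m + 1`, the clique number of `J_n(m,m-1)` is
`max (m+1) (n-m+1)`. -/
theorem stmt6 (n m : ℕ) (hm : 2 ≤ m) (hn : m + 1 ≤ n) :
    (johnsonGraph n m).cliqueNum = max (m + 1) (n - m + 1) := by
  refine le_antisymm (cliqueNum_johnsonGraph_le (by omega)) (max_le ?_ ?_)
  · obtain ⟨U, -, hU⟩ := exists_subset_card_eq (s := (univ : Finset (Fin n))) (n := m + 1)
      (by simpa using hn)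
    calc m + 1 = #(U.powersetCard m) := by
          rw [card_powersetCard, hU, Nat.choose_succ_self_right]
      _ ≤ _ := card_le_cliqueNum_johnsonGraph (fun A hA => (mem_powersetCard.1 hA).2)
          (pairwise_card_inter_powersetCard hU)
  · obtain ⟨K, -, hK⟩ := exists_subset_card_eq (s := (univ : Finset (Fin n))) (n := m - 1)
      (by simp only [card_univ, Fintype.card_fin]; omega)
    have hdisj : Disjoint Kᶜ K := disjoint_compl_left
    calc n - m + 1 = #(Kᶜ.image (insert · K)) := by
          rw [card_image_insert_of_disjoint hdisj, card_compl, Fintype.card_fin, hK]; omega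
      _ ≤ _ := card_le_cliqueNum_johnsonGraph
          (fun A hA => by rw [card_eq_of_mem_image_insert_of_disjoint hdisj hA, hK]; omega)
          (hK ▸ pairwise_card_inter_image_insert K Kᶜ)
end

section
/- Let m ≥ 2, n ≥ m+1, and let H be a maximal clique in the Johnson graph J_n(m,m-1) with ⋂_{v ∈ H} ν(v) = ∅. Put B = ⋃_{v ∈ H} ν(v). Then |B| = m+1, the label sets of the vertices of H are exactly the m-element subsets of B (equivalently, exactly the sets B ∖ {x} for x ∈ B), and |H| = m+1. -/
/-!
Two adjacent vertices `v ≠ w` of a clique span the `(m+1)`-set `v ∪ w` and share the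
`(m-1)`-set `v ∩ w`. A third member `u` of the clique that leaves `v ∪ w` through a point `x`
must be `(v ∩ w) ∪ {x}`, and then every member of the clique contains `v ∩ w`. An empty
intersection rules this out, so the clique lies among the `m`-subsets of `v ∪ w`, all of which
are pairwise adjacent; by maximality it consists of all of them.
-/

open Finset

namespace Finset

variable {α : Type*} [DecidableEq α] {m : ℕ} {s t u B : Finset α} {x : α}

lemma inter_eq_erase_of_card_inter (hu : #u = m) (hx : x ∈ u) (hxt : x ∉ t)
    (htu : #(t ∩ u) = m - 1) : t ∩ u = u.erase x := by
  refine eq_of_subset_of_card_le (fun y hy => ?_) (by rw [card_erase_of_mem hx, hu, htu])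
  obtain ⟨hyt, hyu⟩ := mem_inter.1 hy
  exact mem_erase.2 ⟨fun hyx => hxt (hyx ▸ hyt), hyu⟩

lemma erase_eq_inter_of_card_inter (hu : #u = m) (hx : x ∈ u) (hxs : x ∉ s) (hxt : x ∉ t)
    (hsu : #(s ∩ u) = m - 1) (htu : #(t ∩ u) = m - 1) (hst : #(s ∩ t) = m - 1) :
    u.erase x = s ∩ t := by
  have hs := inter_eq_erase_of_card_inter hu hx hxs hsu
  have ht := inter_eq_erase_of_card_inter hu hx hxt htu
  refine eq_of_subset_of_card_le (subset_inter ?_ ?_) (by rw [hst, ← hsu, hs])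
  · exact hs ▸ inter_subset_left
  · exact ht ▸ inter_subset_left

lemma card_inter_of_subset_of_card_eq_succ (hB : #B = m + 1) (hsB : s ⊆ B) (htB : t ⊆ B)
    (hs : #s = m) (ht : #t = m) (hst : s ≠ t) : #(s ∩ t) = m - 1 := by
  have hunion : #(s ∪ t) ≤ m + 1 := hB ▸ card_le_card (union_subset hsB htB)
  have hlt : m < #(s ∪ t) := by
    refine hs ▸ card_lt_card (ssubset_of_subset_of_ne subset_union_left fun h => hst ?_)
    refine (eq_of_subset_of_card_le ?_ (by rw [hs, ht])).symm
    rw [h]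
    exact subset_union_right
  have hsum := card_inter_add_card_union s t
  omega

lemma powersetCard_eq_image_erase (hB : #B = m + 1) : powersetCard m B = B.image B.erase := by
  ext A
  rw [mem_powersetCard, mem_image, ← covBy_iff_exists_erase, covBy_iff_card_sdiff_eq_one]
  refine and_congr_right fun hAB => ?_
  rw [card_sdiff_of_subset hAB, hB]
  omega

end Finset

section JohnsonGraph

variable {n m : ℕ}

lemma johnsonGraph_card_union_of_adj {v w : JohnsonVertex n m} (h : (johnsonGraph n m).Adj v w) :
    #(v.1 ∪ w.1) = m + 1 := by
  have hlt : #(v.1 ∩ w.1) < #v.1 := by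
    refine card_lt_card (ssubset_of_subset_of_ne inter_subset_left fun hv => h.1 ?_)
    refine Subtype.ext (eq_of_subset_of_card_le ?_ (by rw [v.2, w.2]))
    rw [← hv]
    exact inter_subset_right
  have hsum := card_inter_add_card_union v.1 w.1
  have hinter := h.2
  have hv := v.2
  have hw := w.2
  omega

lemma johnsonGraph_isClique_of_subset {B : Finset (Fin n)} (hB : #B = m + 1)
    {S : Set (JohnsonVertex n m)} (hS : ∀ v ∈ S, v.1 ⊆ B) : (johnsonGraph n m).IsClique S :=
  fun v hv w hw hvw => ⟨hvw, card_inter_of_subset_of_card_eq_succ hB (hS v hv) (hS w hw) v.2 w.2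
    (Subtype.coe_ne_coe.2 hvw)⟩

lemma johnsonGraph_inter_subset_of_notMem_union {S : Set (JohnsonVertex n m)}
    (hS : (johnsonGraph n m).IsClique S) {u v w : JohnsonVertex n m} (hu : u ∈ S) (hv : v ∈ S)
    (hw : w ∈ S) (hvw : v ≠ w) {x : Fin n} (hxu : x ∈ u.1) (hxvw : x ∉ v.1 ∪ w.1) :
    ∀ t ∈ S, v.1 ∩ w.1 ⊆ t.1 := by
  have hxv : x ∉ v.1 := fun h => hxvw (mem_union_left _ h)
  have hxw : x ∉ w.1 := fun h => hxvw (mem_union_right _ h)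
  have erase_eq : ∀ t ∈ S, x ∈ t.1 → t.1.erase x = v.1 ∩ w.1 := fun t ht hxt =>
    erase_eq_inter_of_card_inter t.2 hxt hxv hxw
      (hS hv ht fun h => hxv (h ▸ hxt)).2 (hS hw ht fun h => hxw (h ▸ hxt)).2 (hS hv hw hvw).2
  intro t ht
  by_cases hxt : x ∈ t.1
  · exact erase_eq t ht hxt ▸ erase_subset x t.1
  · have htu : t.1 ∩ u.1 = u.1.erase x :=
      inter_eq_erase_of_card_inter u.2 hxu hxt (hS ht hu fun h => hxt (h ▸ hxu)).2
    rw [← erase_eq u hu hxu, ← htu]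
    exact inter_subset_left

lemma johnsonGraph_subset_union_of_inf_eq_empty (hm : 2 ≤ m) {H : Finset (JohnsonVertex n m)}
    (hH : (johnsonGraph n m).IsClique (H : Set (JohnsonVertex n m)))
    (hS : H.inf Subtype.val = ∅) {v w : JohnsonVertex n m} (hv : v ∈ H) (hw : w ∈ H)
    (hvw : v ≠ w) : ∀ u ∈ H, u.1 ⊆ v.1 ∪ w.1 := by
  intro u hu
  by_contra hnot
  obtain ⟨x, hxu, hxvw⟩ := not_subset.1 hnot
  have hinf : v.1 ∩ w.1 ⊆ H.inf Subtype.val :=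
    Finset.le_inf fun t ht => johnsonGraph_inter_subset_of_notMem_union hH hu hv hw hvw hxu hxvw t ht
  have hcard := (hH hv hw hvw).2
  rw [hS, subset_empty] at hinf
  rw [hinf, card_empty] at hcard
  omega

variable {H : Finset (JohnsonVertex n m)}
  (hH : Maximal (fun s : Finset (JohnsonVertex n m) => (johnsonGraph n m).IsClique ↑s) H)
include hH

lemma johnsonGraph_one_lt_card_of_maximal (hm : 1 ≤ m) (hn : m ≤ n)
    (hS : H.inf Subtype.val = ∅) : 1 < #H := by
  obtain ⟨A, -, hA⟩ := exists_subset_card_eq (s := (univ : Finset (Fin n))) (by simpa using hn)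
  have hne : H.Nonempty := by
    refine nonempty_iff_ne_empty.2 fun hempty => ?_
    have hsingle := hH.2 (y := {⟨A, hA⟩}) (by simp) (hempty ▸ empty_subset _)
    simp [hempty] at hsingle
  refine one_lt_card_iff_nontrivial.2 (hne.exists_eq_singleton_or_nontrivial.resolve_left ?_)
  rintro ⟨v, rfl⟩
  have hv := v.2
  rw [inf_singleton] at hS
  rw [hS, card_empty] at hv
  omega

lemma johnsonGraph_image_val_eq_powersetCard_of_maximal {B : Finset (Fin n)} (hB : #B = m + 1)
    (hHB : ∀ u ∈ H, u.1 ⊆ B) : H.image Subtype.val = powersetCard m B := by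
  ext A
  simp only [mem_image, mem_powersetCard]
  constructor
  · rintro ⟨u, hu, rfl⟩
    exact ⟨hHB u hu, u.2⟩
  · rintro ⟨hAB, hA⟩
    have hclique : (johnsonGraph n m).IsClique ↑(insert ⟨A, hA⟩ H) :=
      johnsonGraph_isClique_of_subset hB fun u hu => by
        rcases mem_insert.1 hu with rfl | hu
        exacts [hAB, hHB u hu]
    exact ⟨⟨A, hA⟩, hH.2 hclique (subset_insert _ _) (mem_insert_self _ _), rfl⟩

end JohnsonGraph

/-- A maximal clique `H` of `J_n(m,m-1)` with empty intersection set has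
`|B| = m + 1` where `B = ⋃_{v ∈ H} ν(v)`, its labels are exactly the `m`-element
subsets of `B`, and `|H| = m + 1`. -/
theorem stmt7 (n m : ℕ) (hm : 2 ≤ m) (hn : m + 1 ≤ n)
    (H : Finset (JohnsonVertex n m))
    (hH : Maximal (fun s : Finset (JohnsonVertex n m) => (johnsonGraph n m).IsClique ↑s) H)
    (hS : H.inf Subtype.val = ∅)
    (B : Finset (Fin n)) (hB : B = H.sup Subtype.val) :
    B.card = m + 1 ∧
    H.image Subtype.val = Finset.powersetCard m B ∧
    H.image Subtype.val = B.image (fun x => B.erase x) ∧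
    H.card = m + 1 := by
  obtain ⟨v, hv, w, hw, hvw⟩ :=
    one_lt_card.1 (johnsonGraph_one_lt_card_of_maximal hH (by omega) (by omega) hS)
  have hsub := johnsonGraph_subset_union_of_inf_eq_empty hm hH.1 hS hv hw hvw
  have hB_eq : B = v.1 ∪ w.1 :=
    hB ▸ le_antisymm (Finset.sup_le hsub) (union_subset (le_sup hv) (le_sup hw))
  have hcard : #B = m + 1 := hB_eq ▸ johnsonGraph_card_union_of_adj (hH.1 hv hw hvw)
  have himage := johnsonGraph_image_val_eq_powersetCard_of_maximal hH hcard (hB_eq ▸ hsub)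
  refine ⟨hcard, himage, himage.trans (powersetCard_eq_image_erase hcard), ?_⟩
  rw [← card_image_of_injective H Subtype.val_injective, himage, card_powersetCard, hcard,
    Nat.choose_succ_self_right]
end

section
/- Let m ≥ 2, n ≥ m+2, and let H be a maximal clique in the Johnson graph J_n(m,m-1) whose intersection set S = ⋂_{v ∈ H} ν(v) has cardinality m−1. Then the label sets of the vertices of H are exactly the sets S ∪ {x} for x ∈ {1,…,n} ∖ S, and |H| = n−m+1. -/
/-!
All labels of `H` contain `S` and have one element more, so any two distinct `m`-sets
containing `S` meet exactly in `S`. Hence every vertex whose label contains `S` is adjacent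
to all of `H`, and maximality puts it in `H`. The `m`-sets containing `S` are the sets
`S ∪ {x}`, `x ∉ S`, and there are `n - (m - 1)` of them.
-/

namespace Finset

variable {α : Type*} [DecidableEq α]

theorem card_inter_eq_of_ne_of_subset {S A B : Finset α} (hA : S ⊆ A) (hB : S ⊆ B)
    (hAB : A ≠ B) (hAcard : #A = #S + 1) (hBcard : #B = #A) : #(A ∩ B) = #S := by
  have hnot : ¬ A ⊆ B := fun h => hAB (eq_of_subset_of_card_le h hBcard.le)
  have hlt : #(A ∩ B) < #A :=
    card_lt_card ⟨inter_subset_left, fun h => hnot (h.trans inter_subset_right)⟩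
  have hle : #S ≤ #(A ∩ B) := card_le_card (subset_inter hA hB)
  omega

theorem card_image_insert_compl [Fintype α] (S : Finset α) :
    #(Sᶜ.image (insert · S)) = Fintype.card α - #S := by
  rw [card_image_of_injOn, card_compl]
  intro x hx y _ hxy
  exact (insert_inj (mem_compl.mp hx)).mp hxy

end Finset

namespace johnsonGraph

variable {n m : ℕ}

theorem adj_of_subset {S : Finset (Fin n)} (hSm : S.card + 1 = m) {v w : JohnsonVertex n m}
    (hv : S ⊆ v.1) (hw : S ⊆ w.1) (hvw : v ≠ w) : (johnsonGraph n m).Adj v w :=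
  ⟨hvw, by
    rw [Finset.card_inter_eq_of_ne_of_subset hv hw (Subtype.coe_ne_coe.mpr hvw)
      (by rw [v.2, hSm]) (by rw [v.2, w.2])]
    omega⟩

theorem mem_of_maximal_of_subset {H : Finset (JohnsonVertex n m)}
    (hH : Maximal (fun s : Finset (JohnsonVertex n m) => (johnsonGraph n m).IsClique ↑s) H)
    {S : Finset (Fin n)} (hSm : S.card + 1 = m) (hSH : ∀ v ∈ H, S ⊆ v.1)
    {w : JohnsonVertex n m} (hw : S ⊆ w.1) : w ∈ H := by
  have hclique : (johnsonGraph n m).IsClique ↑(insert w H) := by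
    rw [Finset.coe_insert]
    exact hH.1.insert fun v hv hne => adj_of_subset hSm hw (hSH v hv) hne
  exact hH.2 hclique (Finset.subset_insert w H) (Finset.mem_insert_self w H)

theorem image_val_eq_of_maximal {H : Finset (JohnsonVertex n m)}
    (hH : Maximal (fun s : Finset (JohnsonVertex n m) => (johnsonGraph n m).IsClique ↑s) H)
    {S : Finset (Fin n)} (hSm : S.card + 1 = m) (hSH : ∀ v ∈ H, S ⊆ v.1) :
    H.image Subtype.val = Sᶜ.image (insert · S) := by
  ext A
  simp only [Finset.mem_image, Finset.mem_compl]
  rw [Finset.exists_eq_insert_iff]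
  constructor
  · rintro ⟨v, hv, rfl⟩
    exact ⟨hSH v hv, by rw [v.2, hSm]⟩
  · rintro ⟨hSA, hA⟩
    exact ⟨⟨A, by rw [← hA, hSm]⟩, mem_of_maximal_of_subset hH hSm hSH hSA, rfl⟩

end johnsonGraph

/-- A maximal clique `H` of `J_n(m,m-1)` (with `n ≥ m + 2`) whose intersection set
`S` has cardinality `m - 1` has labels exactly the sets `S ∪ {x}` for
`x ∈ {1,…,n} \ S`, and `|H| = n - m + 1`. -/
theorem stmt8 (n m : ℕ) (hm : 2 ≤ m) (hn : m + 2 ≤ n)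
    (H : Finset (JohnsonVertex n m))
    (hH : Maximal (fun s : Finset (JohnsonVertex n m) => (johnsonGraph n m).IsClique ↑s) H)
    (S : Finset (Fin n)) (hS : S = H.inf Subtype.val) (hScard : S.card = m - 1) :
    H.image Subtype.val = Sᶜ.image (fun x => insert x S) ∧
    H.card = n - m + 1 := by
  have hSm : S.card + 1 = m := by omega
  have hSH : ∀ v ∈ H, S ⊆ v.1 := fun v hv => hS ▸ Finset.inf_le hv
  have himage := johnsonGraph.image_val_eq_of_maximal hH hSm hSH
  refine ⟨himage, ?_⟩
  rw [← Finset.card_image_of_injective H Subtype.val_injective, himage,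
    Finset.card_image_insert_compl, Fintype.card_fin, hScard]
  omega
end

section
/- Let m ≥ 2 and n ≥ m+1. The number of maximal cliques H of the Johnson graph J_n(m,m-1) with ⋂_{v ∈ H} ν(v) = ∅ equals the binomial coefficient C(n, m+1). -/
/-!
A clique of `J_n(m, m-1)` containing two distinct vertices `A`, `B` either lies inside the
`(m+1)`-set `A ∪ B` or has all its members containing the `(m-1)`-set `A ∩ B`: a third
vertex outside `A ∪ B` meets `A ∪ B` in at most `m - 1` points, yet must meet both `A` and `B`
in `m - 1` points, which forces it through `A ∩ B`. For `m ≥ 2` the second kind of clique has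
nonempty intersection, so the maximal cliques with empty intersection are exactly the
families of all `m`-subsets of an `(m+1)`-set, one for each such set.
-/

open Finset

namespace Finset

variable {α : Type*} [DecidableEq α] {m : ℕ} {A B C S : Finset α}

theorem card_inter_eq_pred_of_subset (hS : #S = m + 1) (hA : #A = m) (hB : #B = m)
    (hAS : A ⊆ S) (hBS : B ⊆ S) (hAB : A ≠ B) : #(A ∩ B) = m - 1 := by
  have hunion : #(A ∪ B) ≤ m + 1 := hS ▸ card_le_card (union_subset hAS hBS)
  have hA_lt : #A < #(A ∪ B) := by
    refine card_lt_card (subset_union_left.ssubset_of_ne fun h => hAB ?_)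
    exact (eq_of_subset_of_card_le (h ▸ subset_union_right) (by omega)).symm
  have := card_union_add_card_inter A B
  omega

theorem card_union_eq_succ (hm : 1 ≤ m) (hA : #A = m) (hB : #B = m)
    (hAB : #(A ∩ B) = m - 1) : #(A ∪ B) = m + 1 := by
  have := card_union_add_card_inter A B
  omega

theorem card_inter_lt_of_not_subset_s9 (hC : #C = m) (h : ¬ C ⊆ S) : #(C ∩ S) < m :=
  hC ▸ card_lt_card (inter_subset_left.ssubset_of_ne fun he => h (inter_eq_left.1 he))

theorem inter_subset_of_not_subset_union (hC : #C = m) (hAB : #(A ∩ B) = m - 1)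
    (hCA : #(C ∩ A) = m - 1) (hCB : #(C ∩ B) = m - 1) (h : ¬ C ⊆ A ∪ B) : A ∩ B ⊆ C := by
  have hsum : #(C ∩ (A ∪ B)) + #(C ∩ (A ∩ B)) = #(C ∩ A) + #(C ∩ B) := by
    rw [inter_union_distrib_left, inter_inter_distrib_left]
    exact card_union_add_card_inter _ _
  have hlt := card_inter_lt_of_not_subset_s9 hC h
  have hle : #(A ∩ B) ≤ #(C ∩ (A ∩ B)) := by omega
  rw [← eq_of_subset_of_card_le inter_subset_right hle]
  exact inter_subset_left

end Finset

namespace johnsonGraph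

variable {n m : ℕ}

theorem subset_union_or_inter_subset_of_isClique {H : Finset (JohnsonVertex n m)}
    (hH : (johnsonGraph n m).IsClique (H : Set (JohnsonVertex n m)))
    {A B : JohnsonVertex n m} (hA : A ∈ H) (hB : B ∈ H) (hAB : A ≠ B) :
    (∀ C ∈ H, C.1 ⊆ A.1 ∪ B.1) ∨ ∀ C ∈ H, A.1 ∩ B.1 ⊆ C.1 := by
  refine or_iff_not_imp_left.2 fun h => ?_
  push Not at h
  obtain ⟨D, hD, hDAB⟩ := h
  have adj {C C' : JohnsonVertex n m} (hC : C ∈ H) (hC' : C' ∈ H) (hne : C ≠ C') :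
      #(C.1 ∩ C'.1) = m - 1 :=
    (hH hC hC' hne).2
  have ne_of_not_subset {C C' : JohnsonVertex n m} (h : ¬ C.1 ⊆ A.1 ∪ B.1)
      (h' : C'.1 ⊆ A.1 ∪ B.1) : C ≠ C' :=
    fun he => h (he ▸ h')
  have hA_sub : A.1 ⊆ A.1 ∪ B.1 := subset_union_left
  have hB_sub : B.1 ⊆ A.1 ∪ B.1 := subset_union_right
  have through {C : JohnsonVertex n m} (hC : C ∈ H) (hCAB : ¬ C.1 ⊆ A.1 ∪ B.1) :
      A.1 ∩ B.1 ⊆ C.1 :=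
    inter_subset_of_not_subset_union C.2 (adj hA hB hAB)
      (adj hC hA (ne_of_not_subset hCAB hA_sub)) (adj hC hB (ne_of_not_subset hCAB hB_sub)) hCAB
  -- `D` meets `A ∪ B` exactly in `A ∩ B`, so any `C ⊆ A ∪ B` meets `D` inside `A ∩ B`.
  have hD_inter : D.1 ∩ (A.1 ∪ B.1) = A.1 ∩ B.1 := by
    refine (eq_of_subset_of_card_le (subset_inter (through hD hDAB) inter_subset_union) ?_).symm
    have := card_inter_lt_of_not_subset_s9 D.2 hDAB
    rw [adj hA hB hAB]
    omega
  intro C hC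
  by_cases hCAB : C.1 ⊆ A.1 ∪ B.1
  · have hCD_sub : C.1 ∩ D.1 ⊆ A.1 ∩ B.1 :=
      hD_inter ▸ fun x hx => mem_inter.2 ⟨(mem_inter.1 hx).2, hCAB (mem_inter.1 hx).1⟩
    have hCD := eq_of_subset_of_card_le hCD_sub <| by
      rw [adj hC hD (ne_of_not_subset hDAB hCAB).symm, adj hA hB hAB]
    exact hCD ▸ inter_subset_left
  · exact through hC hCAB

variable (n m) in
def subsetClique (S : Finset (Fin n)) : Finset (JohnsonVertex n m) :=
  univ.filter fun v => v.1 ⊆ S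

variable {S : Finset (Fin n)}

@[simp]
theorem mem_subsetClique {v : JohnsonVertex n m} : v ∈ subsetClique n m S ↔ v.1 ⊆ S := by
  simp [subsetClique]

theorem exists_mem_subsetClique_eq_erase (hS : #S = m + 1) {x : Fin n} (hx : x ∈ S) :
    ∃ v ∈ subsetClique n m S, v.1 = S.erase x :=
  ⟨⟨S.erase x, by rw [card_erase_of_mem hx, hS, Nat.add_sub_cancel]⟩,
    mem_subsetClique.2 (erase_subset x S), rfl⟩

theorem isClique_subsetClique (hS : #S = m + 1) :
    (johnsonGraph n m).IsClique (subsetClique n m S : Set (JohnsonVertex n m)) := by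
  intro v hv w hw hne
  simp only [mem_coe, mem_subsetClique] at hv hw
  exact ⟨hne, card_inter_eq_pred_of_subset hS v.2 w.2 hv hw (Subtype.coe_injective.ne hne)⟩

theorem maximal_subsetClique (hm : 2 ≤ m) (hS : #S = m + 1) :
    Maximal (fun H : Finset (JohnsonVertex n m) => (johnsonGraph n m).IsClique ↑H)
      (subsetClique n m S) := by
  refine ⟨isClique_subsetClique hS, fun K hK hSK v hv => mem_subsetClique.2 ?_⟩
  by_contra hvS
  -- `v` meets each `S.erase x` in `m - 1 ≥ 1` points but `S` itself in at most `m - 1`,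
  -- so `v ∩ S` is nonempty and cannot lose a point when `x` is removed from it.
  have hvS_card := card_inter_lt_of_not_subset_s9 v.2 hvS
  have hmeet {x} (hx : x ∈ S) : #(v.1 ∩ S.erase x) = m - 1 := by
    obtain ⟨w, hw, hwx⟩ := exists_mem_subsetClique_eq_erase (m := m) hS hx
    rw [← hwx]
    exact (hK hv (hSK hw) fun h => hvS (h ▸ mem_subsetClique.1 hw)).2
  obtain ⟨y, hy⟩ : S.Nonempty := card_pos.1 (by omega)
  obtain ⟨x, hx⟩ : (v.1 ∩ S).Nonempty := by
    refine nonempty_of_ne_empty fun h => ?_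
    have := card_le_card (inter_subset_inter_left (erase_subset y S) : v.1 ∩ S.erase y ⊆ v.1 ∩ S)
    rw [hmeet hy, h, card_empty] at this
    omega
  have hlt : #(v.1 ∩ S.erase x) < #(v.1 ∩ S) := by
    refine card_lt_card ⟨inter_subset_inter_left (erase_subset x S), fun h => ?_⟩
    simpa using h hx
  have := hmeet (mem_inter.1 hx).2
  omega

theorem inf_subsetClique (hS : #S = m + 1) : (subsetClique n m S).inf Subtype.val = ∅ := by
  refine eq_empty_of_forall_notMem fun x hx => ?_
  obtain ⟨y, hy⟩ : S.Nonempty := card_pos.1 (by omega)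
  have hxS : x ∈ S := by
    obtain ⟨v, hv, -⟩ := exists_mem_subsetClique_eq_erase (m := m) hS hy
    exact mem_subsetClique.1 hv (mem_inf.1 hx v hv)
  obtain ⟨v, hv, hvx⟩ := exists_mem_subsetClique_eq_erase (m := m) hS hxS
  simpa [hvx] using mem_inf.1 hx v hv

theorem sup_subsetClique (hm : 1 ≤ m) (hS : #S = m + 1) :
    (subsetClique n m S).sup Subtype.val = S := by
  refine (Finset.sup_le fun v hv => mem_subsetClique.1 hv).antisymm fun x hx => ?_
  obtain ⟨y, hy, hyx⟩ := exists_mem_ne (by omega : 1 < #S) x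
  obtain ⟨v, hv, hvy⟩ := exists_mem_subsetClique_eq_erase (m := m) hS hy
  exact mem_sup.2 ⟨v, hv, hvy ▸ mem_erase.2 ⟨hyx.symm, hx⟩⟩

theorem injOn_subsetClique (hm : 1 ≤ m) :
    Set.InjOn (subsetClique n m) {S | #S = m + 1} :=
  Set.LeftInvOn.injOn (f₁' := fun H => H.sup Subtype.val) fun _ hS => sup_subsetClique hm hS

theorem one_lt_card_of_inf_eq_empty (hm : 1 ≤ m) (hn : 0 < n) {H : Finset (JohnsonVertex n m)}
    (hH : H.inf Subtype.val = ∅) : 1 < #H := by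
  have hH_nonempty : H.Nonempty := nonempty_iff_ne_empty.2 fun h => by
    rw [h, inf_empty] at hH
    exact (univ_nonempty_iff.2 ⟨⟨0, hn⟩⟩).ne_empty hH
  obtain ⟨v, rfl⟩ | hH_nontrivial := hH_nonempty.exists_eq_singleton_or_nontrivial
  · have := v.2
    rw [inf_singleton] at hH
    rw [hH, card_empty] at this
    omega
  · exact one_lt_card_iff_nontrivial.2 hH_nontrivial

theorem eq_subsetClique_of_maximal (hm : 2 ≤ m) (hn : 0 < n) {H : Finset (JohnsonVertex n m)}
    (hmax : Maximal (fun H : Finset (JohnsonVertex n m) => (johnsonGraph n m).IsClique ↑H) H)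
    (hH : H.inf Subtype.val = ∅) : ∃ S, #S = m + 1 ∧ subsetClique n m S = H := by
  obtain ⟨A, hA, B, hB, hAB⟩ := one_lt_card.1 (one_lt_card_of_inf_eq_empty (by omega) hn hH)
  have hAB_card : #(A.1 ∩ B.1) = m - 1 := (hmax.1 hA hB hAB).2
  have hH_sub : ∀ C ∈ H, C.1 ⊆ A.1 ∪ B.1 := by
    refine (subset_union_or_inter_subset_of_isClique hmax.1 hA hB hAB).resolve_right fun h => ?_
    have : A.1 ∩ B.1 ⊆ H.inf Subtype.val := Finset.le_inf h
    rw [hH, subset_empty, ← card_eq_zero, hAB_card] at this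
    omega
  have hS := card_union_eq_succ (by omega) A.2 B.2 hAB_card
  have hsub : H ⊆ subsetClique n m (A.1 ∪ B.1) := fun C hC => mem_subsetClique.2 (hH_sub C hC)
  exact ⟨_, hS, (hmax.2 (isClique_subsetClique hS) hsub).antisymm hsub⟩

end johnsonGraph

open johnsonGraph in
/-- The number of maximal cliques of `J_n(m,m-1)` with empty intersection set is
`C(n, m+1)`. -/
theorem stmt9 (n m : ℕ) (hm : 2 ≤ m) (hn : m + 1 ≤ n) :
    {H : Finset (JohnsonVertex n m) |
        Maximal (fun s : Finset (JohnsonVertex n m) => (johnsonGraph n m).IsClique ↑s) H ∧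
        H.inf Subtype.val = ∅}.ncard = n.choose (m + 1) := by
  have hset : {H : Finset (JohnsonVertex n m) |
      Maximal (fun s : Finset (JohnsonVertex n m) => (johnsonGraph n m).IsClique ↑s) H ∧
        H.inf Subtype.val = ∅} = subsetClique n m '' {S | #S = m + 1} := by
    ext H
    constructor
    · rintro ⟨hmax, hH⟩
      exact eq_subsetClique_of_maximal hm (by omega) hmax hH
    · rintro ⟨S, hS, rfl⟩
      exact ⟨maximal_subsetClique hm hS, inf_subsetClique hS⟩
  have hcard : {S : Finset (Fin n) | #S = m + 1} =
      ↑(powersetCard (m + 1) (univ : Finset (Fin n))) := by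
    ext S
    simp
  rw [hset, (injOn_subsetClique (by omega)).ncard_image, hcard, Set.ncard_coe_finset,
    card_powersetCard, card_univ, Fintype.card_fin]
end

section
/- Let m ≥ 2, n ≥ m+2, and let v₁, v₂ be adjacent vertices of the Johnson graph J_n(m,m-1). Then there is exactly one maximal clique H of J_n(m,m-1) containing both v₁ and v₂ whose intersection set ⋂_{v ∈ H} ν(v) has cardinality m−1; moreover its vertex set is {v : ν(v₁) ∩ ν(v₂) ⊆ ν(v)}. -/
namespace Finset

variable {α : Type*} [DecidableEq α] {B W : Finset α} {x : α}

theorem mem_and_card_inter_of_card_insert_inter_eq (hBW : ¬B ⊆ W) (hx : x ∉ B)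
    (h : (insert x B ∩ W).card = B.card) : x ∈ W ∧ (B ∩ W).card + 1 = B.card := by
  have hlt : (B ∩ W).card < B.card :=
    card_lt_card (inf_lt_left.2 hBW)
  by_cases hxW : x ∈ W
  · rw [insert_inter_of_mem hxW, card_insert_of_notMem fun h => hx (mem_inter.1 h).1] at h
    exact ⟨hxW, h⟩
  · rw [insert_inter_of_notMem hxW] at h
    omega

end Finset

open Finset

variable {n m : ℕ}

theorem JohnsonVertex.card_inter_lt_of_ne {a b : JohnsonVertex n m} (hab : a ≠ b) :
    (a.1 ∩ b.1).card < m := by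
  by_contra! h
  have ha := eq_of_subset_of_card_le inter_subset_left (by rw [a.2]; exact h)
  have hb := eq_of_subset_of_card_le inter_subset_right (by rw [b.2]; exact h)
  exact hab (Subtype.ext (ha.symm.trans hb))

theorem johnsonGraph.card_inter_add_one_of_adj {v w : JohnsonVertex n m}
    (h : (johnsonGraph n m).Adj v w) : (v.1 ∩ w.1).card + 1 = m := by
  have := JohnsonVertex.card_inter_lt_of_ne h.1
  have := h.2
  omega

def johnsonStar (n m : ℕ) (B : Finset (Fin n)) : Finset (JohnsonVertex n m) :=
  Finset.univ.filter (fun v => B ⊆ v.1)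

section johnsonStar

variable {B : Finset (Fin n)} {v : JohnsonVertex n m}

@[simp]
theorem mem_johnsonStar : v ∈ johnsonStar n m B ↔ B ⊆ v.1 := by
  simp [johnsonStar]

theorem isClique_johnsonStar (hB : B.card + 1 = m) :
    (johnsonGraph n m).IsClique (johnsonStar n m B : Set (JohnsonVertex n m)) := by
  intro a ha b hb hab
  rw [mem_coe, mem_johnsonStar] at ha hb
  have hle := card_le_card (subset_inter ha hb)
  have hlt := JohnsonVertex.card_inter_lt_of_ne hab
  exact ⟨hab, by omega⟩

theorem subset_of_forall_adj_johnsonStar (hB : B.card + 1 = m) (hn : m + 2 ≤ n)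
    {w : JohnsonVertex n m}
    (hw : ∀ u ∈ johnsonStar n m B, u ≠ w → (johnsonGraph n m).Adj u w) : B ⊆ w.1 := by
  by_contra hBw
  have hnotin : ∀ x ∉ B, x ∈ w.1 ∧ (B ∩ w.1).card + 1 = B.card := by
    intro x hx
    let u : JohnsonVertex n m := ⟨insert x B, by rw [card_insert_of_notMem hx, hB]⟩
    have hBu : B ⊆ u.1 := subset_insert x B
    have huw : u ≠ w := fun h => hBw (h ▸ hBu)
    have hadj := (hw u (mem_johnsonStar.2 hBu) huw).2
    exact mem_and_card_inter_of_card_insert_inter_eq hBw hx (hadj.trans (by omega))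
  have hcompl : Bᶜ.card = n - B.card := by rw [card_compl, Fintype.card_fin]
  obtain ⟨x, hx⟩ : Bᶜ.Nonempty := by rw [← card_pos]; omega
  have hBw_card := (hnotin x (mem_compl.1 hx)).2
  have hcompl_sub : Bᶜ ⊆ w.1 \ B := fun y hy =>
    mem_sdiff.2 ⟨(hnotin y (mem_compl.1 hy)).1, mem_compl.1 hy⟩
  have hw_card := card_sdiff_add_card_inter w.1 B
  rw [inter_comm, w.2] at hw_card
  have := card_le_card hcompl_sub
  omega

theorem maximal_isClique_johnsonStar (hB : B.card + 1 = m) (hn : m + 2 ≤ n) :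
    Maximal (fun s : Finset (JohnsonVertex n m) => (johnsonGraph n m).IsClique ↑s)
      (johnsonStar n m B) := by
  refine ⟨isClique_johnsonStar hB, fun s hs hstar w hw => ?_⟩
  exact mem_johnsonStar.2 <| subset_of_forall_adj_johnsonStar hB hn
    fun u hu huw => hs (hstar hu) hw huw

theorem inf_johnsonStar_inter (v w : JohnsonVertex n m) :
    (johnsonStar n m (v.1 ∩ w.1)).inf Subtype.val = v.1 ∩ w.1 :=
  le_antisymm
    (le_inf (inf_le (mem_johnsonStar.2 inter_subset_left))
      (inf_le (mem_johnsonStar.2 inter_subset_right)))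
    (Finset.le_inf fun _ hu => mem_johnsonStar.1 hu)

theorem eq_johnsonStar_of_maximal {v₁ v₂ : JohnsonVertex n m} {H : Finset (JohnsonVertex n m)}
    (hB : (v₁.1 ∩ v₂.1).card + 1 = m)
    (hH : Maximal (fun s : Finset (JohnsonVertex n m) => (johnsonGraph n m).IsClique ↑s) H)
    (h₁ : v₁ ∈ H) (h₂ : v₂ ∈ H) (hcard : (H.inf Subtype.val).card = (v₁.1 ∩ v₂.1).card) :
    H = johnsonStar n m (v₁.1 ∩ v₂.1) := by
  have hinf : H.inf Subtype.val = v₁.1 ∩ v₂.1 :=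
    eq_of_subset_of_card_le (le_inf (inf_le h₁) (inf_le h₂)) hcard.ge
  have hsub : H ⊆ johnsonStar n m (v₁.1 ∩ v₂.1) := fun v hv =>
    mem_johnsonStar.2 (hinf ▸ inf_le hv)
  exact le_antisymm hsub (hH.2 (isClique_johnsonStar hB) hsub)

end johnsonStar

theorem stmt12_general (n m : ℕ) (hn : m + 2 ≤ n)
    (v₁ v₂ : JohnsonVertex n m) (hadj : (johnsonGraph n m).Adj v₁ v₂) :
    (∃! H : Finset (JohnsonVertex n m),
      Maximal (fun s : Finset (JohnsonVertex n m) => (johnsonGraph n m).IsClique ↑s) H ∧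
      v₁ ∈ H ∧ v₂ ∈ H ∧ (H.inf Subtype.val).card = m - 1) ∧
    (∀ H : Finset (JohnsonVertex n m),
      (Maximal (fun s : Finset (JohnsonVertex n m) => (johnsonGraph n m).IsClique ↑s) H ∧
        v₁ ∈ H ∧ v₂ ∈ H ∧ (H.inf Subtype.val).card = m - 1) →
      H = Finset.univ.filter (fun v => v₁.1 ∩ v₂.1 ⊆ v.1)) := by
  have hB := johnsonGraph.card_inter_add_one_of_adj hadj
  have huniq : ∀ H : Finset (JohnsonVertex n m),
      (Maximal (fun s : Finset (JohnsonVertex n m) => (johnsonGraph n m).IsClique ↑s) H ∧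
        v₁ ∈ H ∧ v₂ ∈ H ∧ (H.inf Subtype.val).card = m - 1) →
      H = johnsonStar n m (v₁.1 ∩ v₂.1) := fun H ⟨hH, h₁, h₂, hcard⟩ =>
    eq_johnsonStar_of_maximal hB hH h₁ h₂ (hcard.trans hadj.2.symm)
  refine ⟨⟨johnsonStar n m (v₁.1 ∩ v₂.1), ⟨maximal_isClique_johnsonStar hB hn,
    mem_johnsonStar.2 inter_subset_left, mem_johnsonStar.2 inter_subset_right, ?_⟩, huniq⟩, huniq⟩
  rw [inf_johnsonStar_inter]
  exact hadj.2

/-- Every edge of `J_n(m,m-1)` (with `n ≥ m + 2`) lies in exactly one maximal clique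
whose intersection set has cardinality `m - 1`; moreover that clique's vertex set is
`{v : ν(v₁) ∩ ν(v₂) ⊆ ν(v)}`. -/
theorem stmt12 (n m : ℕ) (hm : 2 ≤ m) (hn : m + 2 ≤ n)
    (v₁ v₂ : JohnsonVertex n m) (hadj : (johnsonGraph n m).Adj v₁ v₂) :
    (∃! H : Finset (JohnsonVertex n m),
      Maximal (fun s : Finset (JohnsonVertex n m) => (johnsonGraph n m).IsClique ↑s) H ∧
      v₁ ∈ H ∧ v₂ ∈ H ∧ (H.inf Subtype.val).card = m - 1) ∧
    (∀ H : Finset (JohnsonVertex n m),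
      (Maximal (fun s : Finset (JohnsonVertex n m) => (johnsonGraph n m).IsClique ↑s) H ∧
        v₁ ∈ H ∧ v₂ ∈ H ∧ (H.inf Subtype.val).card = m - 1) →
      H = Finset.univ.filter (fun v => v₁.1 ∩ v₂.1 ⊆ v.1)) :=
  stmt12_general n m hn v₁ v₂ hadj
end

section
/- Let m ≥ 2, n ≥ m+1, let C be a clique of size r ≥ 2 in the Johnson graph J_n(m,m-1), and let H be a maximal clique containing C. If ⋂_{v ∈ H} ν(v) = ∅, then |⋃_{v ∈ C} ν(v)| = m+1 and |⋂_{v ∈ C} ν(v)| = m+1−r. If instead |⋂_{v ∈ H} ν(v)| = m−1, then |⋃_{v ∈ C} ν(v)| = m−1+r and |⋂_{v ∈ C} ν(v)| = m−1. -/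
namespace Finset

variable {ι α : Type*} [DecidableEq α] {s : Finset ι} {f : ι → Finset α}

theorem card_sup_of_card_eq_one (hf : Set.InjOn f s) (h1 : ∀ i ∈ s, #(f i) = 1) :
    #(s.sup f) = #s := by
  have hdisj : (s : Set ι).PairwiseDisjoint f := by
    intro i hi j hj hij
    obtain ⟨a, ha⟩ := card_eq_one.mp (h1 i hi)
    obtain ⟨b, hb⟩ := card_eq_one.mp (h1 j hj)
    have hab : a ≠ b := by
      rintro rfl
      exact hij (hf hi hj (ha.trans hb.symm))
    simpa [Function.onFun, ha, hb] using hab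
  rw [sup_eq_biUnion, card_biUnion hdisj, sum_congr rfl h1, sum_const, smul_eq_mul, mul_one]

theorem card_sup_eq_add_card (hf : Set.InjOn f s) (hs : s.Nonempty) (S : Finset α)
    (hS : ∀ i ∈ s, S ⊆ f i) (hcard : ∀ i ∈ s, #(f i) = #S + 1) :
    #(s.sup f) = #S + #s := by
  obtain ⟨i, hi⟩ := hs
  have hsplit := card_sdiff_add_card_eq_card ((hS i hi).trans (le_sup (f := f) hi))
  have hpoints : #(s.sup f \ S) = #s := by
    rw [← sup_sdiff_right]
    refine card_sup_of_card_eq_one (fun i hi j hj hij => hf hi hj ?_) fun i hi => ?_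
    · simpa only [union_sdiff_of_subset (hS i hi), union_sdiff_of_subset (hS j hj)]
        using congrArg (S ∪ ·) hij
    · rw [card_sdiff_of_subset (hS i hi), hcard i hi, Nat.add_sub_cancel_left]
  omega

theorem card_inf_add_card [Fintype α] (hf : Set.InjOn f s) (hs : s.Nonempty) (T : Finset α)
    (hT : ∀ i ∈ s, f i ⊆ T) (hcard : ∀ i ∈ s, #(f i) + 1 = #T) :
    #(s.inf f) + #s = #T := by
  obtain ⟨i, hi⟩ := hs
  have hsplit := card_sdiff_add_card_eq_card ((inf_le (f := f) hi).trans (hT i hi))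
  have hpoints : #(T \ s.inf f) = #s := by
    rw [← sup_sdiff_left]
    refine card_sup_of_card_eq_one (fun i hi j hj hij => hf hi hj ?_) fun i hi => ?_
    · simpa only [sdiff_sdiff_eq_self (hT i hi), sdiff_sdiff_eq_self (hT j hj)]
        using congrArg (T \ ·) hij
    · rw [card_sdiff_of_subset (hT i hi), ← hcard i hi, Nat.add_sub_cancel_left]
  omega

end Finset

open Finset

section johnsonGraph

variable {n m : ℕ} {u v w z : JohnsonVertex n m}

theorem card_union_of_johnsonGraph_adj (hm : 1 ≤ m) (h : (johnsonGraph n m).Adj u v) :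
    #(u.1 ∪ v.1) = m + 1 := by
  have := card_union_add_card_inter u.1 v.1
  rw [u.2, v.2, h.2] at this
  omega

theorem inter_subset_or_subset_union_of_johnsonGraph_adj (huv : (johnsonGraph n m).Adj u v)
    (huz : (johnsonGraph n m).Adj u z) (hvz : (johnsonGraph n m).Adj v z) :
    u.1 ∩ v.1 ⊆ z.1 ∨ z.1 ⊆ u.1 ∪ v.1 := by
  refine or_iff_not_imp_left.mpr fun hnot => ?_
  have hlt : #(z.1 ∩ (u.1 ∩ v.1)) < m - 1 :=
    huv.2 ▸ card_lt_card ⟨inter_subset_right, fun h => hnot (h.trans inter_subset_left)⟩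
  -- inclusion–exclusion inside `z` forces `#(z ∩ (u ∪ v)) ≥ m = #z`
  have hincl := card_union_add_card_inter (z.1 ∩ u.1) (z.1 ∩ v.1)
  rw [← inter_union_distrib_left, ← inter_inter_distrib_left, huz.symm.2, hvz.symm.2] at hincl
  have hz : z.1 ∩ (u.1 ∪ v.1) = z.1 :=
    eq_of_subset_of_card_le inter_subset_left (by rw [z.2]; omega)
  exact hz ▸ inter_subset_right

theorem subset_union_of_isClique {H : Set (JohnsonVertex n m)}
    (hH : (johnsonGraph n m).IsClique H)
    (hu : u ∈ H) (hv : v ∈ H) (huv : (johnsonGraph n m).Adj u v) (hw : w ∈ H)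
    (hwuv : ¬ u.1 ∩ v.1 ⊆ w.1) (hz : z ∈ H) : z.1 ⊆ u.1 ∪ v.1 := by
  have hwu : w ≠ u := by rintro rfl; exact hwuv inter_subset_left
  have hwv : w ≠ v := by rintro rfl; exact hwuv inter_subset_right
  have hwsub : w.1 ⊆ u.1 ∪ v.1 :=
    (inter_subset_or_subset_union_of_johnsonGraph_adj huv (hH hu hw hwu.symm)
      (hH hv hw hwv.symm)).resolve_left hwuv
  rcases eq_or_ne z u with rfl | hzu
  · exact subset_union_left
  rcases eq_or_ne z v with rfl | hzv
  · exact subset_union_right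
  rcases eq_or_ne z w with rfl | hzw
  · exact hwsub
  have huw := hH hu hw hwu.symm
  have hvw := hH hv hw hwv.symm
  rcases inter_subset_or_subset_union_of_johnsonGraph_adj huw (hH hu hz hzu.symm)
    (hH hw hz hzw.symm) with huwz | hzuw
  · rcases inter_subset_or_subset_union_of_johnsonGraph_adj hvw (hH hv hz hzv.symm)
      (hH hw hz hzw.symm) with hvwz | hzvw
    · -- `w = (u ∩ w) ∪ (v ∩ w) ⊆ z` would force `w = z`
      have hwz : w.1 ⊆ z.1 := by
        intro x hx
        rcases mem_union.mp (hwsub hx) with hxu | hxv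
        exacts [huwz (mem_inter.mpr ⟨hxu, hx⟩), hvwz (mem_inter.mpr ⟨hxv, hx⟩)]
      exact absurd (Subtype.ext (eq_of_subset_of_card_le hwz (by rw [z.2, w.2]))) hzw.symm
    · exact hzvw.trans (union_subset subset_union_right hwsub)
  · exact hzuw.trans (union_subset subset_union_left hwsub)

end johnsonGraph

theorem stmt13_general (n m r : ℕ) (hm : 2 ≤ m) (hr : 2 ≤ r)
    (C H : Finset (JohnsonVertex n m))
    (hC : (johnsonGraph n m).IsClique ↑C) (hCr : C.card = r)
    (hH : Maximal (fun s : Finset (JohnsonVertex n m) => (johnsonGraph n m).IsClique ↑s) H)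
    (hCH : C ⊆ H) :
    (H.inf Subtype.val = ∅ →
      (C.sup Subtype.val).card = m + 1 ∧ (C.inf Subtype.val).card = m + 1 - r) ∧
    ((H.inf Subtype.val).card = m - 1 →
      (C.sup Subtype.val).card = m - 1 + r ∧ (C.inf Subtype.val).card = m - 1) := by
  obtain ⟨u, hu, v, hv, huv⟩ := one_lt_card.mp (by omega : 1 < #C)
  have hadj : (johnsonGraph n m).Adj u v := hC hu hv huv
  have hinj : Set.InjOn Subtype.val (C : Set (JohnsonVertex n m)) := Subtype.val_injective.injOn
  refine ⟨fun hHinf => ?_, fun hHinf => ?_⟩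
  · obtain ⟨w, hw, hwuv⟩ : ∃ w ∈ H, ¬ u.1 ∩ v.1 ⊆ w.1 := by
      by_contra! hall
      have := card_le_card ((Finset.le_inf hall).trans_eq hHinf)
      rw [hadj.2, card_empty] at this
      omega
    have hT := card_union_of_johnsonGraph_adj (by omega) hadj
    have hsub : ∀ z ∈ C, z.1 ⊆ u.1 ∪ v.1 := fun z hz =>
      subset_union_of_isClique hH.1 (hCH hu) (hCH hv) hadj hw hwuv (hCH hz)
    have hsup : C.sup Subtype.val = u.1 ∪ v.1 :=
      (Finset.sup_le hsub).antisymm (union_subset (le_sup hu) (le_sup hv))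
    have hinf := card_inf_add_card hinj ⟨u, hu⟩ _ hsub fun z _ => by rw [z.2, hT]
    exact ⟨hsup ▸ hT, by omega⟩
  · have hCinf : #(C.inf Subtype.val) = m - 1 := by
      have hH_le := card_le_card (inf_mono hCH : H.inf Subtype.val ≤ C.inf Subtype.val)
      have hle_uv := card_le_card
        (subset_inter (inf_le hu) (inf_le hv) : C.inf Subtype.val ⊆ u.1 ∩ v.1)
      rw [hadj.2] at hle_uv
      omega
    refine ⟨?_, hCinf⟩
    rw [card_sup_eq_add_card hinj ⟨u, hu⟩ _ (fun z hz => inf_le hz)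
      fun z _ => by rw [z.2, hCinf]; omega, hCinf, hCr]

/-- Union/intersection label-set sizes of an `r`-clique `C` (`r ≥ 2`) of `J_n(m,m-1)`,
according to the type of a maximal clique `H ⊇ C`. -/
theorem stmt13 (n m r : ℕ) (hm : 2 ≤ m) (hn : m + 1 ≤ n) (hr : 2 ≤ r)
    (C H : Finset (JohnsonVertex n m))
    (hC : (johnsonGraph n m).IsClique ↑C) (hCr : C.card = r)
    (hH : Maximal (fun s : Finset (JohnsonVertex n m) => (johnsonGraph n m).IsClique ↑s) H)
    (hCH : C ⊆ H) :
    (H.inf Subtype.val = ∅ →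
      (C.sup Subtype.val).card = m + 1 ∧ (C.inf Subtype.val).card = m + 1 - r) ∧
    ((H.inf Subtype.val).card = m - 1 →
      (C.sup Subtype.val).card = m - 1 + r ∧ (C.inf Subtype.val).card = m - 1) :=
  stmt13_general n m r hm hr C H hC hCr hH hCH
end

section
/- Let m ≥ 2, n ≥ m+1, and let C be a clique of size r > 2 in the Johnson graph J_n(m,m-1). Then there is exactly one maximal clique H of J_n(m,m-1) with C ⊆ H. -/
/-!
Two adjacent vertices `A`, `B` determine the `(m-1)`-set `K = A ∩ B` and the `(m+1)`-set
`U = A ∪ B`, and every common neighbour `w` of `A` and `B` lies in the star `K ⊆ w` or in the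
top `w ⊆ U`, but not in both. A star vertex outside the top and a top vertex outside the star
are never adjacent, so all common neighbours of a triangle `A, B, D` lie on the same side as
`D`, and any two distinct vertices of one star or one top are adjacent. Hence the vertices
adjacent to all of a clique `C` with at least three vertices form a clique; it is the greatest
clique containing `C`, hence the only maximal one.
-/

theorem existsUnique_maximal_and_le_of_isGreatest {α : Type*} [PartialOrder α] {P : α → Prop}
    {a s : α} (h : IsGreatest {x | P x ∧ a ≤ x} s) : ∃! x, Maximal P x ∧ a ≤ x := by
  obtain ⟨⟨hPs, has⟩, hs⟩ := h
  refine ⟨s, ⟨⟨hPs, fun y hy hsy => hs ⟨hy, has.trans hsy⟩⟩, has⟩, ?_⟩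
  rintro x ⟨hx, hax⟩
  have hxs : x ≤ s := hs ⟨hx.prop, hax⟩
  exact le_antisymm hxs (hx.2 hPs hxs)

namespace SimpleGraph

variable {V : Type*} (G : SimpleGraph V)

theorem isClique_setOf_forall_adj_of_subset {C T : Set V} (hTC : T ⊆ C)
    (hT : G.IsClique {x | ∀ t ∈ T, G.Adj x t}) :
    G.IsClique {x | ∀ c ∈ C, x ≠ c → G.Adj x c} := by
  intro u hu v hv huv
  by_cases huC : u ∈ C
  · exact (hv u huC (Ne.symm huv)).symm
  by_cases hvC : v ∈ C
  · exact hu v hvC huv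
  have adj_T {x} (hx : ∀ c ∈ C, x ≠ c → G.Adj x c) (hxC : x ∉ C) : ∀ t ∈ T, G.Adj x t :=
    fun t ht => hx t (hTC ht) fun hxt => hxC (hxt ▸ hTC ht)
  exact hT (adj_T hu huC) (adj_T hv hvC) huv

theorem existsUnique_maximal_isClique_superset [Fintype V] {C : Finset V}
    (hC : G.IsClique (C : Set V)) (hS : G.IsClique {x | ∀ c ∈ C, x ≠ c → G.Adj x c}) :
    ∃! H : Finset V, Maximal (fun s : Finset V => G.IsClique (s : Set V)) H ∧ C ⊆ H := by
  classical
  refine existsUnique_maximal_and_le_of_isGreatest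
    (s := Finset.univ.filter fun x => ∀ c ∈ C, x ≠ c → G.Adj x c) ⟨⟨?_, ?_⟩, ?_⟩
  · simpa only [Finset.coe_filter, Finset.mem_univ, true_and] using hS
  · exact fun x hx => Finset.mem_filter.mpr ⟨Finset.mem_univ x, fun c hc hxc => hC hx hc hxc⟩
  · rintro H ⟨hH, hCH⟩ x hx
    exact Finset.mem_filter.mpr ⟨Finset.mem_univ x, fun c hc hxc => hH hx (hCH hc) hxc⟩

end SimpleGraph

namespace Finset

variable {α : Type*} [DecidableEq α] {m : ℕ} {s t w A B K U : Finset α}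

theorem card_inter_lt_of_ne (hs : s.card = m) (ht : t.card = m) (hst : s ≠ t) :
    (s ∩ t).card < m :=
  hs ▸ card_lt_card (inf_lt_left.mpr fun h => hst (eq_of_subset_of_card_le h (by rw [hs, ht])))

theorem card_inter_add_one_of_subset (hsU : s ⊆ U) (htU : t ⊆ U) (hU : U.card = m + 1)
    (hs : s.card = m) (ht : t.card = m) (hst : s ≠ t) : (s ∩ t).card + 1 = m := by
  have := card_union_add_card_inter s t
  have := card_le_card (union_subset hsU htU)
  have := card_inter_lt_of_ne hs ht hst
  omega

theorem card_inter_add_one_of_superset (hKs : K ⊆ s) (hKt : K ⊆ t) (hK : K.card + 1 = m)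
    (hs : s.card = m) (ht : t.card = m) (hst : s ≠ t) : (s ∩ t).card + 1 = m := by
  have := card_le_card (subset_inter hKs hKt)
  have := card_inter_lt_of_ne hs ht hst
  omega

section CommonNeighbor

variable (hw : w.card = m) (hwA : (w ∩ A).card + 1 = m) (hwB : (w ∩ B).card + 1 = m)
  (hAB : (A ∩ B).card + 1 = m)
include hw hwA hwB hAB

theorem subset_union_or_inter_subset : w ⊆ A ∪ B ∨ A ∩ B ⊆ w := by
  refine or_iff_not_imp_left.mpr fun hwU => ?_
  have hlt : (w ∩ (A ∪ B)).card < m := hw ▸ card_lt_card (inf_lt_left.mpr hwU)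
  have hA : w ∩ A = w ∩ (A ∪ B) :=
    eq_of_subset_of_card_le (inter_subset_inter_left subset_union_left) (by omega)
  have hB : w ∩ B = w ∩ (A ∪ B) :=
    eq_of_subset_of_card_le (inter_subset_inter_left subset_union_right) (by omega)
  have hwAB : w ∩ A ⊆ A ∩ B := fun x hx =>
    mem_inter.mpr ⟨(mem_inter.mp hx).2, (mem_inter.mp ((hA.trans hB.symm) ▸ hx)).2⟩
  calc A ∩ B = w ∩ A := (eq_of_subset_of_card_le hwAB (by omega)).symm
    _ ⊆ w := inter_subset_left

theorem not_subset_union_of_inter_subset (hKw : A ∩ B ⊆ w) : ¬ w ⊆ A ∪ B := by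
  intro hwU
  have := card_union_add_card_inter (w ∩ A) (w ∩ B)
  rw [← inter_union_distrib_left, inter_eq_left.mpr hwU, ← inter_inter_distrib_left,
    inter_eq_right.mpr hKw] at this
  omega

end CommonNeighbor

theorem card_inter_lt_of_subset_of_superset (hKU : K ⊆ U) (hsU : s ⊆ U) (hKs : ¬ K ⊆ s)
    (hKt : K ⊆ t) (htU : ¬ t ⊆ U) (ht : t.card = K.card + 1) : (s ∩ t).card < K.card := by
  have htU' : t ∩ U = K := by
    refine (eq_of_subset_of_card_le (subset_inter hKt hKU) ?_).symm
    have : (t ∩ U).card < t.card := card_lt_card (inf_lt_left.mpr htU)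
    omega
  have hstK : s ∩ t ⊆ K := fun x hx =>
    htU' ▸ mem_inter.mpr ⟨(mem_inter.mp hx).2, hsU (mem_inter.mp hx).1⟩
  exact card_lt_card (ssubset_of_subset_of_ne hstK
    fun h => hKs (h ▸ inter_subset_left))

end Finset

open Finset

variable {n m : ℕ}

theorem johnsonGraph_adj_iff {v w : JohnsonVertex n m} :
    (johnsonGraph n m).Adj v w ↔ (v.1 ∩ w.1).card + 1 = m := by
  refine ⟨fun ⟨hvw, h⟩ => ?_, fun h => ⟨fun hvw => ?_, by omega⟩⟩
  · have := card_inter_lt_of_ne v.2 w.2 (Subtype.coe_ne_coe.mpr hvw)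
    omega
  · rw [hvw, inter_self, w.2] at h
    omega

theorem johnsonGraph_isClique_commonNeighbors_of_triangle {A B D : JohnsonVertex n m}
    (hAB : (johnsonGraph n m).Adj A B) (hAD : (johnsonGraph n m).Adj A D)
    (hBD : (johnsonGraph n m).Adj B D) :
    (johnsonGraph n m).IsClique
      {w | (johnsonGraph n m).Adj w A ∧ (johnsonGraph n m).Adj w B ∧
        (johnsonGraph n m).Adj w D} := by
  rintro u ⟨huA, huB, huD⟩ v ⟨hvA, hvB, hvD⟩ huv
  have huv' : u.1 ≠ v.1 := Subtype.coe_ne_coe.mpr huv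
  rw [johnsonGraph_adj_iff] at *
  rw [inter_comm] at hAD hBD
  have hKU : A.1 ∩ B.1 ⊆ A.1 ∪ B.1 := inter_subset_left.trans subset_union_left
  have hU : (A.1 ∪ B.1).card = m + 1 := by
    have := card_union_add_card_inter A.1 B.1
    rw [A.2, B.2] at this
    omega
  by_cases hDU : D.1 ⊆ A.1 ∪ B.1
  · have hKD := mt (not_subset_union_of_inter_subset D.2 hAD hBD hAB) (not_not.mpr hDU)
    have top {w : JohnsonVertex n m} (hwA : (w.1 ∩ A.1).card + 1 = m)
        (hwB : (w.1 ∩ B.1).card + 1 = m) (hwD : (w.1 ∩ D.1).card + 1 = m) :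
        w.1 ⊆ A.1 ∪ B.1 := by
      by_contra hwU
      have hKw := (subset_union_or_inter_subset w.2 hwA hwB hAB).resolve_left hwU
      have := card_inter_lt_of_subset_of_superset hKU hDU hKD hKw hwU (by rw [w.2]; omega)
      rw [inter_comm] at this
      linarith
    exact card_inter_add_one_of_subset (top huA huB huD) (top hvA hvB hvD) hU u.2 v.2 huv'
  · have hKD := (subset_union_or_inter_subset D.2 hAD hBD hAB).resolve_left hDU
    have star {w : JohnsonVertex n m} (hwA : (w.1 ∩ A.1).card + 1 = m)
        (hwB : (w.1 ∩ B.1).card + 1 = m) (hwD : (w.1 ∩ D.1).card + 1 = m) :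
        A.1 ∩ B.1 ⊆ w.1 := by
      by_contra hKw
      have hwU := (subset_union_or_inter_subset w.2 hwA hwB hAB).resolve_right hKw
      have := card_inter_lt_of_subset_of_superset hKU hwU hKw hKD hDU (by rw [D.2]; omega)
      linarith
    exact card_inter_add_one_of_superset (star huA huB huD) (star hvA hvB hvD) hAB u.2 v.2 huv'

theorem stmt14_general (n m r : ℕ) (hr : 2 < r)
    (C : Finset (JohnsonVertex n m))
    (hC : (johnsonGraph n m).IsClique ↑C) (hCr : C.card = r) :
    ∃! H : Finset (JohnsonVertex n m),
      Maximal (fun s : Finset (JohnsonVertex n m) => (johnsonGraph n m).IsClique ↑s) H ∧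
      C ⊆ H := by
  obtain ⟨A, hA, B, hB, D, hD, hAB, hAD, hBD⟩ := two_lt_card.mp (hCr ▸ hr)
  have hT : ({A, B, D} : Set (JohnsonVertex n m)) ⊆ C := by
    simp only [Set.insert_subset_iff, Set.singleton_subset_iff, mem_coe]
    exact ⟨hA, hB, hD⟩
  refine (johnsonGraph n m).existsUnique_maximal_isClique_superset hC
    ((johnsonGraph n m).isClique_setOf_forall_adj_of_subset hT ?_)
  simpa only [Set.mem_insert_iff, Set.mem_singleton_iff, forall_eq_or_imp, forall_eq] using
    johnsonGraph_isClique_commonNeighbors_of_triangle (hC hA hB hAB) (hC hA hD hAD) (hC hB hD hBD)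

/-- Any clique of size `r > 2` of `J_n(m,m-1)` extends to exactly one maximal clique. -/
theorem stmt14 (n m r : ℕ) (hm : 2 ≤ m) (hn : m + 1 ≤ n) (hr : 2 < r)
    (C : Finset (JohnsonVertex n m))
    (hC : (johnsonGraph n m).IsClique ↑C) (hCr : C.card = r) :
    ∃! H : Finset (JohnsonVertex n m),
      Maximal (fun s : Finset (JohnsonVertex n m) => (johnsonGraph n m).IsClique ↑s) H ∧
      C ⊆ H :=
  stmt14_general n m r hr C hC hCr
end

section
/- Let n > m ≥ 2 and let F be a family of m-element subsets of {1,…,n} such that |A ∩ B| = m−1 for all distinct A, B ∈ F, and such that F is maximal with this property (no m-element subset of {1,…,n} outside F intersects every member of F in exactly m−1 elements). Then the common intersection ⋂_{A ∈ F} A has cardinality 0 or m−1. -/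
/-!
Take distinct `A, B ∈ F` and put `S = A ∩ B`, `Y = A ∪ B`, so `|S| = m - 1` and `|Y| = m + 1`.
By inclusion–exclusion, an `m`-set meeting both `A` and `B` in `m - 1` points either contains `S`
or lies in `Y`. If every member of `F` contains `S`, then `S` is the common intersection.
Otherwise some member `C ⊆ Y` misses a point of `S`; a member `S ∪ {d}` can then meet `C` in
`m - 1` points only if `d ∈ C`, so every member of `F` lies in `Y`.
Any two distinct `m`-subsets of an `(m + 1)`-set meet in `m - 1` points, so maximality puts every
`Y \ {x}` into `F`, and the common intersection is empty.
-/

open Finset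

variable {α : Type*} [DecidableEq α] {m : ℕ}

theorem inter_subset_or_subset_union {A B D : Finset α} (hD : #D = m)
    (hDA : #(D ∩ A) = m - 1) (hDB : #(D ∩ B) = m - 1) (hAB : #(A ∩ B) = m - 1) :
    A ∩ B ⊆ D ∨ D ⊆ A ∪ B := by
  by_contra! h
  have hinter : #(D ∩ (A ∩ B)) < #(A ∩ B) :=
    card_lt_card ⟨inter_subset_right, fun h' => h.1 (h'.trans inter_subset_left)⟩
  have hunion : #(D ∩ (A ∪ B)) < #D :=
    card_lt_card ⟨inter_subset_left, fun h' => h.2 (h'.trans inter_subset_right)⟩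
  have hincl_excl : #(D ∩ (A ∪ B)) + #(D ∩ (A ∩ B)) = #(D ∩ A) + #(D ∩ B) := by
    rw [inter_union_distrib_left, inter_inter_distrib_left]
    exact card_union_add_card_inter _ _
  omega

theorem subset_union_of_superset_of_card_inter {S C D : Finset α} (hSD : S ⊆ D) (hD : #D = m)
    (hS : #S = m - 1) (hDC : #(D ∩ C) = m - 1) (hSC : ¬ S ⊆ C) : D ⊆ S ∪ C := by
  intro x hxD
  by_contra hx
  rw [mem_union, not_or] at hx
  have herase : D.erase x = S :=
    (eq_of_subset_of_card_le (subset_erase.2 ⟨hSD, hx.1⟩)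
      (by rw [card_erase_of_mem hxD]; omega)).symm
  have hDC_sub : D ∩ C ⊆ S ∩ C := fun y hy => by
    rw [mem_inter] at hy ⊢
    refine ⟨herase ▸ mem_erase.2 ⟨?_, hy.1⟩, hy.2⟩
    rintro rfl
    exact hx.2 hy.2
  have hSC_lt : #(S ∩ C) < #S :=
    card_lt_card ⟨inter_subset_left, fun h => hSC (h.trans inter_subset_right)⟩
  have := card_le_card hDC_sub
  omega

theorem card_inter_of_subset_of_card_eq_add_one {Y E D : Finset α} (hY : #Y = m + 1)
    (hEY : E ⊆ Y) (hDY : D ⊆ Y) (hE : #E = m) (hD : #D = m) (hED : E ≠ D) :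
    #(E ∩ D) = m - 1 := by
  have hunion : #(E ∪ D) ≤ m + 1 := hY ▸ card_le_card (union_subset hEY hDY)
  have hinter : #(E ∩ D) < #E :=
    card_lt_card ⟨inter_subset_left, fun h =>
      hED (eq_of_subset_of_card_le (h.trans inter_subset_right) (by omega))⟩
  have := card_union_add_card_inter E D
  omega

section Family

variable {F : Finset (Finset α)}

theorem forall_subset_union_of_not_subset_inter (hcard : ∀ A ∈ F, #A = m)
    (hpair : ∀ A ∈ F, ∀ B ∈ F, A ≠ B → #(A ∩ B) = m - 1)
    {A B C : Finset α} (hA : A ∈ F) (hB : B ∈ F) (hAB : A ≠ B) (hC : C ∈ F)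
    (hSC : ¬ A ∩ B ⊆ C) : ∀ D ∈ F, D ⊆ A ∪ B := by
  have hS := hpair A hA B hB hAB
  have star_or_sub : ∀ D ∈ F, A ∩ B ⊆ D ∨ D ⊆ A ∪ B := fun D hD => by
    by_cases hDA : D = A
    · exact .inl (hDA ▸ inter_subset_left)
    by_cases hDB : D = B
    · exact .inl (hDB ▸ inter_subset_right)
    exact inter_subset_or_subset_union (hcard D hD) (hpair D hD A hA hDA)
      (hpair D hD B hB hDB) hS
  have hCY : C ⊆ A ∪ B := (star_or_sub C hC).resolve_left hSC
  intro D hD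
  refine (star_or_sub D hD).elim (fun hSD => ?_) id
  have hDC : D ≠ C := fun h => hSC (h ▸ hSD)
  have hDSC := subset_union_of_superset_of_card_inter hSD (hcard D hD) hS (hpair D hD C hC hDC) hSC
  exact hDSC.trans (union_subset inter_subset_union hCY)

theorem inf_id_eq_empty_of_forall_erase_mem [Fintype α] {A Y : Finset α}
    (hA : A ∈ F) (hAY : A ⊆ Y) (hF : ∀ x ∈ Y, Y.erase x ∈ F) : F.inf id = ∅ := by
  refine eq_empty_of_forall_notMem fun x hx => ?_
  have hxY : x ∈ Y := hAY (inf_le (f := id) hA hx)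
  exact (mem_erase.1 (inf_le (f := id) (hF x hxY) hx)).1 rfl

theorem mem_of_subset_of_maximal (hcard : ∀ A ∈ F, #A = m)
    (hmax : ∀ A : Finset α, #A = m → A ∉ F → ¬ ∀ B ∈ F, #(A ∩ B) = m - 1)
    {Y E : Finset α} (hY : #Y = m + 1) (hFY : ∀ D ∈ F, D ⊆ Y) (hEY : E ⊆ Y) (hE : #E = m) :
    E ∈ F := by
  by_contra hEF
  exact hmax E hE hEF fun D hD =>
    card_inter_of_subset_of_card_eq_add_one hY hEY (hFY D hD) hE (hcard D hD)
      fun h => hEF (h ▸ hD)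

theorem exists_ne_of_maximal [Fintype α] (hm : 1 ≤ m) (hn : m < Fintype.card α)
    (hcard : ∀ A ∈ F, #A = m)
    (hmax : ∀ A : Finset α, #A = m → A ∉ F → ¬ ∀ B ∈ F, #(A ∩ B) = m - 1) :
    ∃ A ∈ F, ∃ B ∈ F, A ≠ B := by
  obtain ⟨A, hA⟩ : F.Nonempty := by
    obtain ⟨A₀, -, hA₀⟩ :=
      exists_subset_card_eq (s := (univ : Finset α)) (n := m) (by simpa using hn.le)
    by_contra hF
    rw [not_nonempty_iff_eq_empty] at hF
    subst hF
    exact hmax A₀ hA₀ (notMem_empty _) (by simp)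
  by_contra! hsingle
  obtain ⟨a, ha⟩ : A.Nonempty := card_pos.1 (by rw [hcard A hA]; omega)
  obtain ⟨x, -, hx⟩ :=
    exists_mem_notMem_of_card_lt_card (s := A) (t := univ) (by simpa [hcard A hA])
  -- Exchanging `a` for `x` produces an `m`-set adjacent to `A`, the only member of `F`.
  have hY : #(insert x A) = m + 1 := by rw [card_insert_of_notMem hx, hcard A hA]
  have hB : #((insert x A).erase a) = m := by
    rw [card_erase_of_mem (mem_insert_of_mem ha), hY]; rfl
  have hBA : (insert x A).erase a ≠ A := fun h =>
    hx (h ▸ mem_erase.2 ⟨fun hxa => hx (hxa ▸ ha), mem_insert_self x A⟩)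
  refine hmax _ hB (fun h => hBA (hsingle _ hA _ h).symm) fun C hC => ?_
  rw [← hsingle A hA C hC]
  exact card_inter_of_subset_of_card_eq_add_one hY (erase_subset a _) (subset_insert x A) hB
    (hcard A hA) hBA

end Family

/-- A maximal family of `m`-subsets of `{1,…,n}` pairwise intersecting in exactly
`m - 1` elements has common intersection of cardinality `0` or `m - 1`. -/
theorem stmt16 (n m : ℕ) (hm : 2 ≤ m) (hn : m < n)
    (F : Finset (Finset (Fin n)))
    (hcard : ∀ A ∈ F, A.card = m)
    (hpair : ∀ A ∈ F, ∀ B ∈ F, A ≠ B → (A ∩ B).card = m - 1)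
    (hmax : ∀ A : Finset (Fin n), A.card = m → A ∉ F →
      ¬ (∀ B ∈ F, (A ∩ B).card = m - 1)) :
    (F.inf id).card = 0 ∨ (F.inf id).card = m - 1 := by
  obtain ⟨A, hA, B, hB, hAB⟩ :=
    exists_ne_of_maximal (by omega) (by rwa [Fintype.card_fin]) hcard hmax
  have hS := hpair A hA B hB hAB
  by_cases hstar : ∀ C ∈ F, A ∩ B ⊆ C
  · right
    have hinf : F.inf id = A ∩ B :=
      le_antisymm (le_inf (inf_le hA) (inf_le hB)) (Finset.le_inf hstar)
    rw [hinf, hS]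
  · left
    push Not at hstar
    obtain ⟨C, hC, hSC⟩ := hstar
    have hY : #(A ∪ B) = m + 1 := by
      have := card_union_add_card_inter A B
      rw [hcard A hA, hcard B hB, hS] at this
      omega
    have hFY := forall_subset_union_of_not_subset_inter hcard hpair hA hB hAB hC hSC
    rw [card_eq_zero]
    refine inf_id_eq_empty_of_forall_erase_mem hA (hFY A hA) fun x hx => ?_
    exact mem_of_subset_of_maximal hcard hmax hY hFY (erase_subset x _)
      (by rw [card_erase_of_mem hx, hY]; rfl)
end

section
/- Let m ≥ 2 and n ≥ m+1. The maximum cardinality of a family F of m-element subsets of {1,…,n} such that |A ∩ B| = m−1 for all distinct A, B ∈ F equals max(m+1, n−m+1). -/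
/-!
If `A ≠ B` are members of such a family `F`, every other member `C` either contains `A ∩ B` or
lies inside `A ∪ B`: otherwise `C` has a point `x` outside `A ∪ B`, and `C.erase x`, which meets
both `A` and `B` in `m - 1` points, is forced to be `A ∩ B`. The two alternatives cannot both occur
in `F`, so `F` is either a star of sets `insert x (A ∩ B)`, at most `n - m + 1` of them, or consists
of `m`-subsets of the `(m + 1)`-set `A ∪ B`. Both kinds of family, taken in full, attain the bounds.
-/

open Finset FinsetFamily

namespace Finset

variable {α : Type*} [DecidableEq α]

/-- A clique in the Johnson graph `J(α, m)`. -/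
def IsJohnsonClique (m : ℕ) (F : Finset (Finset α)) : Prop :=
  (∀ A ∈ F, #A = m) ∧ ∀ A ∈ F, ∀ B ∈ F, A ≠ B → #(A ∩ B) = m - 1

lemma erase_subset_of_card_inter {A C : Finset α} {x : α} (hxC : x ∈ C) (hxA : x ∉ A)
    (hCA : #(C ∩ A) = #C - 1) : C.erase x ⊆ A := by
  have hsub : C ∩ A ⊆ C.erase x := fun y hy =>
    mem_erase.2 ⟨fun h => hxA (h ▸ (mem_inter.1 hy).2), (mem_inter.1 hy).1⟩
  have heq : C ∩ A = C.erase x :=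
    eq_of_subset_of_card_le hsub (by rw [card_erase_of_mem hxC, hCA])
  exact heq ▸ inter_subset_right

lemma inter_subset_or_subset_union {A B C : Finset α} {m : ℕ} (hC : #C = m)
    (hCA : #(C ∩ A) = m - 1) (hCB : #(C ∩ B) = m - 1) (hAB : #(A ∩ B) = m - 1) :
    A ∩ B ⊆ C ∨ C ⊆ A ∪ B := by
  refine or_iff_not_imp_right.2 fun hCAB => ?_
  obtain ⟨x, hxC, hxAB⟩ := not_subset.1 hCAB
  have hxA : x ∉ A := fun h => hxAB (mem_union_left B h)
  have hxB : x ∉ B := fun h => hxAB (mem_union_right A h)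
  have hsub : C.erase x ⊆ A ∩ B := subset_inter
    (erase_subset_of_card_inter hxC hxA (hC ▸ hCA)) (erase_subset_of_card_inter hxC hxB (hC ▸ hCB))
  have heq : C.erase x = A ∩ B :=
    eq_of_subset_of_card_le hsub (by rw [card_erase_of_mem hxC, hC, hAB])
  exact heq ▸ erase_subset x C

lemma card_upShadow_singleton [Fintype α] (s : Finset α) :
    #(∂⁺ {s}) = Fintype.card α - #s := by
  rw [upShadow, sup_singleton, card_image_of_injOn (insert_inj_on' s), card_compl]

namespace IsJohnsonClique

variable {m : ℕ} {F : Finset (Finset α)}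

lemma forall_inter_subset_or_forall_subset_union (hF : IsJohnsonClique m F) {A B : Finset α}
    (hA : A ∈ F) (hB : B ∈ F) (hAB : A ≠ B) :
    (∀ C ∈ F, A ∩ B ⊆ C) ∨ ∀ C ∈ F, C ⊆ A ∪ B := by
  obtain ⟨hcard, hinter⟩ := hF
  have dichotomy : ∀ C ∈ F, A ∩ B ⊆ C ∨ C ⊆ A ∪ B := by
    intro C hC
    by_cases hCA : C = A
    · exact Or.inl (hCA ▸ inter_subset_left)
    by_cases hCB : C = B
    · exact Or.inl (hCB ▸ inter_subset_right)
    exact inter_subset_or_subset_union (hcard C hC) (hinter C hC A hA hCA)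
      (hinter C hC B hB hCB) (hinter A hA B hB hAB)
  by_contra! ⟨⟨C, hC, hABC⟩, ⟨D, hD, hDAB⟩⟩
  have hCAB : C ⊆ A ∪ B := (dichotomy C hC).resolve_left hABC
  have hABD : A ∩ B ⊆ D := (dichotomy D hD).resolve_right hDAB
  -- `D` is `A ∩ B` plus a point outside `A ∪ B`, so it meets `A ∪ B` only in `A ∩ B`.
  have hDtrace : D ∩ (A ∪ B) = A ∩ B := by
    have hlt : #(D ∩ (A ∪ B)) < #D :=
      card_lt_card ⟨inter_subset_left, fun h => hDAB (h.trans inter_subset_right)⟩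
    refine (eq_of_subset_of_card_le (subset_inter hABD inter_subset_union) ?_).symm
    rw [hinter A hA B hB hAB, ← hcard D hD]
    omega
  have hCD : C ≠ D := fun h => hABC (h ▸ hABD)
  have hsub : C ∩ D ⊆ A ∩ B := hDtrace ▸ fun x hx =>
    mem_inter.2 ⟨(mem_inter.1 hx).2, hCAB (mem_inter.1 hx).1⟩
  have heq : C ∩ D = A ∩ B :=
    eq_of_subset_of_card_le hsub (by rw [hinter C hC D hD hCD, hinter A hA B hB hAB])
  exact hABC (heq ▸ inter_subset_left)

lemma card_le_max [Fintype α] (hF : IsJohnsonClique m F) (hm : m ≠ 0) :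
    #F ≤ max (m + 1) (Fintype.card α - m + 1) := by
  rcases le_or_gt #F 1 with hF1 | hF1
  · exact le_max_of_le_left (by omega)
  obtain ⟨A, hA, B, hB, hAB⟩ := one_lt_card.1 hF1
  have hS : #(A ∩ B) = m - 1 := hF.2 A hA B hB hAB
  rcases hF.forall_inter_subset_or_forall_subset_union hA hB hAB with hstar | hsimplex
  · have hsub : F ⊆ ∂⁺ {A ∩ B} := fun C hC => mem_upShadow_iff_exists_mem_card_add_one.2
      ⟨A ∩ B, mem_singleton_self _, hstar C hC, by rw [hF.1 C hC, hS]; omega⟩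
    have := card_le_card hsub
    rw [card_upShadow_singleton, hS] at this
    exact le_max_of_le_right (by omega)
  · have hunion : #(A ∪ B) = m + 1 := by
      have := card_union_add_card_inter A B
      rw [hF.1 A hA, hF.1 B hB, hS] at this
      omega
    have hsub : F ⊆ (A ∪ B).powersetCard m := fun C hC =>
      mem_powersetCard.2 ⟨hsimplex C hC, hF.1 C hC⟩
    have := card_le_card hsub
    rw [card_powersetCard, hunion, Nat.choose_succ_self_right] at this
    exact le_max_of_le_left this

end IsJohnsonClique

lemma isJohnsonClique_powersetCard {m : ℕ} {T : Finset α} (hT : #T = m + 1) :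
    IsJohnsonClique m (T.powersetCard m) := by
  refine ⟨fun A hA => (mem_powersetCard.1 hA).2, fun A hA B hB hAB => ?_⟩
  obtain ⟨hAT, hA⟩ := mem_powersetCard.1 hA
  obtain ⟨hBT, hB⟩ := mem_powersetCard.1 hB
  have hunion : #(A ∪ B) ≤ m + 1 := hT ▸ card_le_card (union_subset hAT hBT)
  have hinter : #(A ∩ B) < m := by
    refine hA ▸ card_lt_card ⟨inter_subset_left, fun h => hAB ?_⟩
    exact eq_of_subset_of_card_le (fun x hx => (mem_inter.1 (h hx)).2) (by rw [hA, hB])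
  have := card_union_add_card_inter A B
  omega

lemma isJohnsonClique_upShadow_singleton [Fintype α] (S : Finset α) :
    IsJohnsonClique (#S + 1) (∂⁺ {S}) := by
  simp only [IsJohnsonClique, mem_upShadow_iff, mem_singleton, exists_eq_left]
  refine ⟨?_, ?_⟩
  · rintro _ ⟨a, ha, rfl⟩
    exact card_insert_of_notMem ha
  · rintro _ ⟨a, ha, rfl⟩ _ ⟨b, hb, rfl⟩ hab
    have hne : a ≠ b := fun h => hab (h ▸ rfl)
    rw [insert_inter_of_notMem (by simp [hne, ha]), inter_eq_left.2 (subset_insert b S)]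
    rfl

theorem isGreatest_card_isJohnsonClique [Fintype α] {m : ℕ} (hm : m ≠ 0)
    (hcard : m + 1 ≤ Fintype.card α) :
    IsGreatest {r | ∃ F : Finset (Finset α), #F = r ∧ IsJohnsonClique m F}
      (max (m + 1) (Fintype.card α - m + 1)) := by
  refine ⟨?_, fun r ⟨F, hFr, hF⟩ => hFr ▸ hF.card_le_max hm⟩
  rcases le_total (Fintype.card α - m + 1) (m + 1) with h | h
  · obtain ⟨T, -, hT⟩ := exists_subset_card_eq (s := (univ : Finset α)) (n := m + 1)
      (by rwa [card_univ])
    rw [max_eq_left h]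
    refine ⟨_, ?_, isJohnsonClique_powersetCard hT⟩
    rw [card_powersetCard, hT, Nat.choose_succ_self_right]
  · obtain ⟨S, -, hS⟩ := exists_subset_card_eq (s := (univ : Finset α)) (n := m - 1)
      (by rw [card_univ]; omega)
    have hSm : #S + 1 = m := by omega
    rw [max_eq_right h]
    refine ⟨_, ?_, hSm ▸ isJohnsonClique_upShadow_singleton S⟩
    rw [card_upShadow_singleton, hS]
    omega

end Finset

/-- The maximum cardinality of a family of `m`-subsets of `{1,…,n}` pairwise
intersecting in exactly `m - 1` elements is `max (m+1) (n-m+1)`. -/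
theorem stmt17 (n m : ℕ) (hm : 2 ≤ m) (hn : m + 1 ≤ n) :
    IsGreatest {r : ℕ | ∃ F : Finset (Finset (Fin n)),
        F.card = r ∧
        (∀ A ∈ F, A.card = m) ∧
        (∀ A ∈ F, ∀ B ∈ F, A ≠ B → (A ∩ B).card = m - 1)}
      (max (m + 1) (n - m + 1)) := by
  have h := isGreatest_card_isJohnsonClique (α := Fin n) (m := m) (by omega)
    (by rwa [Fintype.card_fin])
  rwa [Fintype.card_fin] at h
end
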